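/- arXiv:1109.2368 — 10 statements merged into one kernel-verified Lean document; each statement's English description precedes it below -/
import Mathlib

section
/- Let S be the ground set of a matroid with rank function ρ, and let U = {S_1, ..., S_k} be a family of subsets of S. For every positive integer d, the family U has an independent partial transversal of cardinality d if and only if d ≤ ρ(⋃_{i∈I} S_i) + k − |I| for every subset I ⊆ {1,...,k}. -/
/-- The rank of a set in a matroid: the supremum of cardinalities of independent
subsets of the set. -/
noncomputable def matroidRank {α : Type*} (M : Matroid α) (X : Set α) : ℕ :=
  sSup {n : ℕ | ∃ J : Finset α, ↑J ⊆ X ∧ M.Indep ↑J ∧ J.card = n}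

section RankAPI

variable {α : Type*} [Fintype α] {M : Matroid α} {X Y A B : Set α}

lemma matroidRank_bddAbove (M : Matroid α) (X : Set α) :
    BddAbove {n : ℕ | ∃ J : Finset α, ↑J ⊆ X ∧ M.Indep ↑J ∧ J.card = n} := by
  refine ⟨Fintype.card α, fun n hn => ?_⟩
  obtain ⟨J, -, -, rfl⟩ := hn
  exact Finset.card_le_univ J

lemma Finset.card_le_matroidRank {J : Finset α} (h1 : ↑J ⊆ X) (h2 : M.Indep ↑J) :
    J.card ≤ matroidRank M X :=
  le_csSup (matroidRank_bddAbove M X) ⟨J, h1, h2, rfl⟩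

lemma ncard_le_matroidRank {J : Set α} (h1 : J ⊆ X) (h2 : M.Indep J) :
    J.ncard ≤ matroidRank M X := by
  have hfin : J.Finite := J.toFinite
  have := Finset.card_le_matroidRank (J := hfin.toFinset) (M := M) (X := X)
    (by simpa using h1) (by simpa using h2)
  simpa [Set.ncard_eq_toFinset_card J hfin] using this

lemma exists_matroidRank (M : Matroid α) (X : Set α) :
    ∃ J : Finset α, ↑J ⊆ X ∧ M.Indep ↑J ∧ J.card = matroidRank M X := by
  have h : matroidRank M X ∈ {n : ℕ | ∃ J : Finset α, ↑J ⊆ X ∧ M.Indep ↑J ∧ J.card = n} :=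
    Nat.sSup_mem ⟨0, ∅, by simp⟩ (matroidRank_bddAbove M X)
  exact h

lemma matroidRank_mono (M : Matroid α) (h : X ⊆ Y) : matroidRank M X ≤ matroidRank M Y := by
  obtain ⟨J, hJX, hJi, hJc⟩ := exists_matroidRank M X
  exact hJc ▸ Finset.card_le_matroidRank (hJX.trans h) hJi

lemma matroidRank_eq_of_basis' {J : Set α} (hJ : M.IsBasis' J X) :
    matroidRank M X = J.ncard := by
  refine le_antisymm ?_ (ncard_le_matroidRank hJ.subset hJ.indep)
  obtain ⟨J₀, hJ₀X, hJ₀i, hJ₀c⟩ := exists_matroidRank M X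
  obtain ⟨J₁, hJ₁, hJ₀₁⟩ := hJ₀i.subset_isBasis'_of_subset hJ₀X
  have hcard : J₁.encard = J.encard := hJ₁.encard_eq_encard hJ
  have : J₀.card ≤ J₁.ncard := by
    have := Set.ncard_le_ncard hJ₀₁ J₁.toFinite
    simpa [Set.ncard_coe_finset] using this
  rw [← hJ₀c]
  refine this.trans ?_
  rw [Set.ncard, Set.ncard, hcard]

lemma matroidRank_submodular (M : Matroid α) (A B : Set α) :
    matroidRank M (A ∪ B) + matroidRank M (A ∩ B) ≤ matroidRank M A + matroidRank M B := by
  obtain ⟨I, hI⟩ := M.exists_isBasis' (A ∩ B)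
  obtain ⟨K, hK, hIK⟩ := hI.indep.subset_isBasis'_of_subset
    (hI.subset.trans (Set.inter_subset_left.trans Set.subset_union_left))
  rw [matroidRank_eq_of_basis' hK, matroidRank_eq_of_basis' hI]
  have h1 : (K ∩ A).ncard ≤ matroidRank M A :=
    ncard_le_matroidRank Set.inter_subset_right (hK.indep.subset Set.inter_subset_left)
  have h2 : (K ∩ B).ncard ≤ matroidRank M B :=
    ncard_le_matroidRank Set.inter_subset_right (hK.indep.subset Set.inter_subset_left)
  have key : (K ∩ A).ncard + (K ∩ B).ncard = K.ncard + (K ∩ (A ∩ B)).ncard := by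
    rw [← Set.ncard_union_add_ncard_inter (K ∩ A) (K ∩ B) (K ∩ A).toFinite (K ∩ B).toFinite]
    have hu : K ∩ A ∪ K ∩ B = K := by
      rw [← Set.inter_union_distrib_left]
      exact Set.inter_eq_left.2 hK.subset
    have hi : (K ∩ A) ∩ (K ∩ B) = K ∩ (A ∩ B) := by
      ext x; simp; tauto
    rw [hu, hi]
  have hIle : I.ncard ≤ (K ∩ (A ∩ B)).ncard :=
    Set.ncard_le_ncard (Set.subset_inter hIK hI.subset) (K ∩ (A ∩ B)).toFinite
  omega

end RankAPI

lemma matroidRank_empty {α : Type*} [Fintype α] (M : Matroid α) : matroidRank M (∅ : Set α) = 0 := by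
  obtain ⟨J, hJX, hJi, hJc⟩ := exists_matroidRank M (∅ : Set α)
  have : J = ∅ := by
    have := Set.subset_empty_iff.mp hJX
    exact_mod_cast this
  rw [← hJc, this, Finset.card_empty]

lemma perfect_key {α : Type*} [Fintype α] (n : ℕ) :
    ∀ (M : Matroid α) (k : ℕ) (S : Fin k → Set α), (∀ i, S i ⊆ M.E) →
    (∑ i, (S i).ncard) = n →
    ∀ d : ℕ, 0 < d →
    (∀ I : Finset (Fin k), d + I.card ≤ matroidRank M (⋃ i ∈ I, S i) + k) →
    ∃ (S' : Finset α) (θ : α → Fin k), S'.card = d ∧ M.Indep ↑S' ∧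
      Set.InjOn θ ↑S' ∧ ∀ s ∈ S', s ∈ S (θ s) := by
  induction n using Nat.strong_induction_on with
  | _ n IH =>
    intro M k S hS hsum d hd h
    classical
    by_cases hsmall : ∀ i, (S i).ncard ≤ 1
    · -- base case : every set has at most one element
      have hk : 0 < k := by
        rcases Nat.eq_zero_or_pos k with hk0 | hk0
        · exfalso
          subst hk0
          have := h ∅
          simp only [Finset.card_empty, add_zero, Finset.notMem_empty,
            Set.iUnion_of_empty, Set.iUnion_empty, matroidRank_empty] at this
          omega
        · exact hk0
      have hX := h Finset.univ
      rw [Finset.card_univ, Fintype.card_fin] at hX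
      obtain ⟨J, hJX, hJi, hJc⟩ := exists_matroidRank M (⋃ i ∈ (Finset.univ : Finset (Fin k)), S i)
      obtain ⟨J', hJ'J, hJ'c⟩ := Finset.exists_subset_card_eq (s := J) (n := d) (by omega)
      have hJ'X : ↑J' ⊆ ⋃ i, S i := by
        refine (Finset.coe_subset.2 hJ'J).trans (hJX.trans ?_)
        simp
      refine ⟨J', fun s => if hs : ∃ i, s ∈ S i then hs.choose else ⟨0, hk⟩, hJ'c,
        hJi.subset (Finset.coe_subset.2 hJ'J), ?_, ?_⟩
      · intro s hs t ht hst
        have hsmem : ∃ i, s ∈ S i := by simpa using hJ'X hs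
        have htmem : ∃ i, t ∈ S i := by simpa using hJ'X ht
        simp only [dif_pos hsmem, dif_pos htmem] at hst
        have h1 : s ∈ S hsmem.choose := hsmem.choose_spec
        have h2 : t ∈ S hsmem.choose := hst ▸ htmem.choose_spec
        exact Set.ncard_le_one_iff ((S hsmem.choose).toFinite) |>.mp
          (hsmall hsmem.choose) h1 h2
      · intro s hs
        have hsmem : ∃ i, s ∈ S i := by simpa using hJ'X (by exact_mod_cast hs)
        simp only [dif_pos hsmem]
        exact hsmem.choose_spec
    · -- inductive step
      push_neg at hsmall
      obtain ⟨i₀, hi₀⟩ := hsmall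
      obtain ⟨x, y, hx, hy, hxy⟩ := (Set.one_lt_ncard_iff (S i₀).toFinite).mp hi₀
      have hlt : ∀ z ∈ S i₀, ∑ i, ((Function.update S i₀ (S i₀ \ {z})) i).ncard < n := by
        intro z hz
        rw [← hsum]
        refine Finset.sum_lt_sum (fun i _ => ?_) ⟨i₀, Finset.mem_univ i₀, ?_⟩
        · rcases eq_or_ne i i₀ with rfl | hne
          · simp only [Function.update_self]
            exact Set.ncard_le_ncard Set.diff_subset (S i).toFinite
          · simp [Function.update_of_ne hne]
        · simp only [Function.update_self]
          rw [Set.ncard_diff_singleton_of_mem hz]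
          omega
      -- try each reduced family
      have main : ∀ z ∈ S i₀, (∀ I : Finset (Fin k),
            d + I.card ≤ matroidRank M (⋃ i ∈ I, Function.update S i₀ (S i₀ \ {z}) i) + k) →
          ∃ (S' : Finset α) (θ : α → Fin k), S'.card = d ∧ M.Indep ↑S' ∧
            Set.InjOn θ ↑S' ∧ ∀ s ∈ S', s ∈ S (θ s) := by
        intro z hz hgood
        have hsub : ∀ i, Function.update S i₀ (S i₀ \ {z}) i ⊆ S i := by
          intro i
          rcases eq_or_ne i i₀ with rfl | hne
          · simp
          · simp [Function.update_of_ne hne]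
        obtain ⟨S', θ, h1, h2, h3, h4⟩ := IH _ (hlt z hz) M k _
          (fun i => (hsub i).trans (hS i)) rfl d hd hgood
        exact ⟨S', θ, h1, h2, h3, fun s hs => hsub (θ s) (h4 s hs)⟩
      by_cases hgood₁ : ∀ I : Finset (Fin k),
          d + I.card ≤ matroidRank M (⋃ i ∈ I, Function.update S i₀ (S i₀ \ {x}) i) + k
      · exact main x hx hgood₁
      by_cases hgood₂ : ∀ I : Finset (Fin k),
          d + I.card ≤ matroidRank M (⋃ i ∈ I, Function.update S i₀ (S i₀ \ {y}) i) + k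
      · exact main y hy hgood₂
      -- contradiction via submodularity
      exfalso
      push_neg at hgood₁ hgood₂
      obtain ⟨I₁, hI₁⟩ := hgood₁
      obtain ⟨I₂, hI₂⟩ := hgood₂
      have hmem₁ : i₀ ∈ I₁ := by
        by_contra hmem
        have heq : (⋃ i ∈ I₁, Function.update S i₀ (S i₀ \ {x}) i) = ⋃ i ∈ I₁, S i := by
          apply Set.iUnion₂_congr
          intro i hi
          have : i ≠ i₀ := fun he => hmem (he ▸ hi)
          simp [Function.update_of_ne this]
        rw [heq] at hI₁
        exact absurd (h I₁) (by omega)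
      have hmem₂ : i₀ ∈ I₂ := by
        by_contra hmem
        have heq : (⋃ i ∈ I₂, Function.update S i₀ (S i₀ \ {y}) i) = ⋃ i ∈ I₂, S i := by
          apply Set.iUnion₂_congr
          intro i hi
          have : i ≠ i₀ := fun he => hmem (he ▸ hi)
          simp [Function.update_of_ne this]
        rw [heq] at hI₂
        exact absurd (h I₂) (by omega)
      have hQsub : (⋃ i ∈ I₁ ∪ I₂, S i) ⊆
          (⋃ i ∈ I₁, Function.update S i₀ (S i₀ \ {x}) i) ∪
          (⋃ i ∈ I₂, Function.update S i₀ (S i₀ \ {y}) i) := by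
        intro z hz
        simp only [Set.mem_iUnion, exists_prop] at hz
        obtain ⟨i, hiQ, hzi⟩ := hz
        rcases eq_or_ne i i₀ with rfl | hne
        · rcases eq_or_ne z x with rfl | hzx
          · right
            refine Set.mem_biUnion hmem₂ ?_
            simp only [Function.update_self]
            exact ⟨hzi, by simpa using hxy⟩
          · left
            refine Set.mem_biUnion hmem₁ ?_
            simp only [Function.update_self]
            exact ⟨hzi, by simpa using hzx⟩
        · rcases Finset.mem_union.mp hiQ with hi | hi
          · exact Or.inl (Set.mem_biUnion hi (by simp [Function.update_of_ne hne, hzi]))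
          · exact Or.inr (Set.mem_biUnion hi (by simp [Function.update_of_ne hne, hzi]))
      have hPsub : (⋃ i ∈ (I₁ ∩ I₂).erase i₀, S i) ⊆
          (⋃ i ∈ I₁, Function.update S i₀ (S i₀ \ {x}) i) ∩
          (⋃ i ∈ I₂, Function.update S i₀ (S i₀ \ {y}) i) := by
        intro z hz
        simp only [Set.mem_iUnion, exists_prop] at hz
        obtain ⟨i, hiP, hzi⟩ := hz
        have hne : i ≠ i₀ := Finset.ne_of_mem_erase hiP
        have hiI : i ∈ I₁ ∩ I₂ := Finset.mem_of_mem_erase hiP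
        constructor
        · exact Set.mem_biUnion (Finset.mem_inter.mp hiI).1
            (by simp [Function.update_of_ne hne, hzi])
        · exact Set.mem_biUnion (Finset.mem_inter.mp hiI).2
            (by simp [Function.update_of_ne hne, hzi])
      have hrQ := (matroidRank_mono M hQsub)
      have hrP := (matroidRank_mono M hPsub)
      have hsubmod := matroidRank_submodular M
        (⋃ i ∈ I₁, Function.update S i₀ (S i₀ \ {x}) i)
        (⋃ i ∈ I₂, Function.update S i₀ (S i₀ \ {y}) i)
      have hhQ := h (I₁ ∪ I₂)
      have hhP := h ((I₁ ∩ I₂).erase i₀)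
      have hcard : (I₁ ∪ I₂).card + (I₁ ∩ I₂).card = I₁.card + I₂.card :=
        Finset.card_union_add_card_inter I₁ I₂
      have hPcard : ((I₁ ∩ I₂).erase i₀).card = (I₁ ∩ I₂).card - 1 :=
        Finset.card_erase_of_mem (Finset.mem_inter.mpr ⟨hmem₁, hmem₂⟩)
      have hIpos : 0 < (I₁ ∩ I₂).card :=
        Finset.card_pos.mpr ⟨i₀, Finset.mem_inter.mpr ⟨hmem₁, hmem₂⟩⟩
      omega

/-- **Perfect's theorem** (generalizing Rado's theorem and Hall's marriage theorem).
Let `M` be a matroid on a ground set and `S 1, ..., S k` a family of subsets of the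
ground set.  For every positive integer `d`, the family has an independent partial
transversal of cardinality `d` (an independent set `S'` with an injection
`θ : S' → Fin k` such that `s ∈ S (θ s)` for all `s ∈ S'`) if and only if
`d ≤ ρ(⋃_{i ∈ I} S i) + k - |I|` for every `I ⊆ {1, ..., k}`. -/
theorem perfect_theorem {α : Type*} [Fintype α] (M : Matroid α) (k : ℕ)
    (S : Fin k → Set α) (hS : ∀ i, S i ⊆ M.E) (d : ℕ) (hd : 0 < d) :
    (∃ (S' : Finset α) (θ : α → Fin k), S'.card = d ∧ M.Indep ↑S' ∧
      Set.InjOn θ ↑S' ∧ ∀ s ∈ S', s ∈ S (θ s)) ↔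
    (∀ I : Finset (Fin k), d ≤ matroidRank M (⋃ i ∈ I, S i) + (k - I.card)) := by

  classical
  have hIk : ∀ I : Finset (Fin k), I.card ≤ k := by
    intro I
    simpa using Finset.card_le_univ I
  constructor
  · rintro ⟨S', θ, hc, hi, hinj, hmem⟩ I
    set T₁ : Finset α := S'.filter (fun s => θ s ∈ I) with hT₁
    set T₂ : Finset α := S'.filter (fun s => θ s ∉ I) with hT₂
    have hsplit : T₁.card + T₂.card = d := by
      rw [hT₁, hT₂, Finset.card_filter_add_card_filter_not, hc]
    have h₁ : T₁.card ≤ matroidRank M (⋃ i ∈ I, S i) := by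
      refine Finset.card_le_matroidRank ?_ (hi.subset ?_)
      · intro s hs
        simp only [hT₁, Finset.coe_filter, Set.mem_setOf_eq] at hs
        exact Set.mem_biUnion hs.2 (hmem s hs.1)
      · exact_mod_cast Finset.filter_subset _ _
    have h₂ : T₂.card ≤ k - I.card := by
      have : T₂.card ≤ Iᶜ.card := by
        refine Finset.card_le_card_of_injOn θ ?_ ?_
        · intro a ha
          rw [hT₂, Finset.coe_filter] at ha
          simpa using ha.2
        · exact hinj.mono (by exact_mod_cast Finset.filter_subset _ _)
      rwa [Finset.card_compl, Fintype.card_fin] at this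
    omega
  · intro h
    refine perfect_key (∑ i, (S i).ncard) M k S hS rfl d hd ?_
    intro I
    have := h I
    have := hIk I
    omega
end

section
/- Let A_1, ..., A_k be finite subsets of ℚ^n (or ℝ^n), each with at least two elements. Then the maximum over all tuples E = (E_1,...,E_k), where each E_i is a two-element subset of A_i, of the dimension of the Minkowski sum conv(E_1) + ... + conv(E_k), equals the minimum over subsets I ⊆ {1,...,k} of dim(Σ_{i∈I} conv(A_i)) + k − |I|, where dim denotes the dimension of the affine span. -/
open scoped Pointwise
open Submodule Module

section Aux

variable {V : Type} [AddCommGroup V] [Module ℚ V]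

lemma aux_vectorSpan_convexHull (s : Set V) :
    vectorSpan ℚ (convexHull ℚ s) = vectorSpan ℚ s := by
  rw [← direction_affineSpan, affineSpan_convexHull, direction_affineSpan]

lemma aux_vectorSpan_add {s t : Set V} (hs : s.Nonempty) (ht : t.Nonempty) :
    vectorSpan ℚ (s + t) = vectorSpan ℚ s ⊔ vectorSpan ℚ t := by
  apply le_antisymm
  · rw [vectorSpan_def, span_le]
    rintro x hx
    rw [Set.mem_vsub] at hx
    obtain ⟨u, hu, w, hw, rfl⟩ := hx
    obtain ⟨a, ha, b, hb, rfl⟩ := hu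
    obtain ⟨a', ha', b', hb', rfl⟩ := hw
    have : (a + b) -ᵥ (a' + b') = (a - a') + (b - b') := by
      rw [vsub_eq_sub]; abel
    rw [this]
    exact add_mem
      (le_sup_left (α := Submodule ℚ V)
        (vsub_mem_vectorSpan ℚ ha ha' : a -ᵥ a' ∈ _))
      (le_sup_right (α := Submodule ℚ V)
        (vsub_mem_vectorSpan ℚ hb hb' : b -ᵥ b' ∈ _))
  · apply sup_le
    · rw [vectorSpan_def, span_le]
      rintro x hx
      rw [Set.mem_vsub] at hx
      obtain ⟨a, ha, a', ha', rfl⟩ := hx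
      obtain ⟨b, hb⟩ := ht
      have : a -ᵥ a' = (a + b) -ᵥ (a' + b) := by rw [vsub_eq_sub, vsub_eq_sub]; abel
      rw [this]
      exact vsub_mem_vectorSpan ℚ (Set.add_mem_add ha hb) (Set.add_mem_add ha' hb)
    · rw [vectorSpan_def, span_le]
      rintro x hx
      rw [Set.mem_vsub] at hx
      obtain ⟨b, hb, b', hb', rfl⟩ := hx
      obtain ⟨a, ha⟩ := hs
      have : b -ᵥ b' = (a + b) -ᵥ (a + b') := by rw [vsub_eq_sub, vsub_eq_sub]; abel
      rw [this]
      exact vsub_mem_vectorSpan ℚ (Set.add_mem_add ha hb) (Set.add_mem_add ha hb')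

lemma aux_sum_nonempty {ι : Type*} (I : Finset ι) (C : ι → Set V)
    (h : ∀ i ∈ I, (C i).Nonempty) : (∑ i ∈ I, C i).Nonempty := by
  classical
  induction I using Finset.induction_on with
  | empty => simp [← Set.singleton_zero]
  | @insert a s hni ih =>
    rw [Finset.sum_insert hni]
    exact (h a (by simp)).add (ih fun i hi => h i (by simp [hi]))

lemma aux_vectorSpan_sum {ι : Type*} (I : Finset ι) (C : ι → Set V)
    (h : ∀ i ∈ I, (C i).Nonempty) :
    vectorSpan ℚ (∑ i ∈ I, C i) = ⨆ i ∈ I, vectorSpan ℚ (C i) := by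
  classical
  induction I using Finset.induction_on with
  | empty => simp [← Set.singleton_zero]
  | @insert a s hni ih =>
    rw [Finset.sum_insert hni,
      aux_vectorSpan_add (h a (by simp)) (aux_sum_nonempty s C fun i hi => h i (by simp [hi])),
      ih (fun i hi => h i (by simp [hi]))]
    simp [iSup_or, iSup_sup_eq]

end Aux


lemma aux_finrank_map_add {V : Type} [AddCommGroup V] [Module ℚ V] [FiniteDimensional ℚ V]
    {W : Type} [AddCommGroup W] [Module ℚ W]
    (f : V →ₗ[ℚ] W) (p : Submodule ℚ V) :
    finrank ℚ (p.map f) + finrank ℚ ↥(p ⊓ LinearMap.ker f) = finrank ℚ ↥p := by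
  have h := LinearMap.finrank_range_add_finrank_ker (f.comp p.subtype)
  rw [LinearMap.range_comp, Submodule.range_subtype, LinearMap.ker_comp] at h
  have e1 := Submodule.equivMapOfInjective p.subtype (injective_subtype p)
      (comap p.subtype (LinearMap.ker f))
  rw [Submodule.map_comap_subtype] at e1
  rw [← h, e1.finrank_eq]

lemma aux_biUnion_map {V : Type} {k : ℕ} (I : Finset (Fin k)) (D : Fin (k + 1) → Set V) :
    ⋃ j ∈ I.map Fin.castSuccEmb, D j = ⋃ i ∈ I, D (Fin.castSucc i) := by
  ext x
  simp only [Set.mem_iUnion, Finset.mem_map, exists_prop]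
  constructor
  · rintro ⟨j, ⟨i, hi, rfl⟩, hx⟩; exact ⟨i, hi, hx⟩
  · rintro ⟨i, hi, hx⟩; exact ⟨Fin.castSuccEmb i, ⟨i, hi, rfl⟩, hx⟩

/-- Perfect's theorem for vector matroids: a system of representatives of large rank exists. -/
lemma aux_perfect : ∀ (k : ℕ) (V : Type) [AddCommGroup V] [Module ℚ V]
    [FiniteDimensional ℚ V] (m : ℕ) (D : Fin k → Set V), (∀ i, (D i).Nonempty) →
    (∀ I : Finset (Fin k), m + I.card ≤ finrank ℚ (span ℚ (⋃ i ∈ I, D i)) + k) →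
    ∃ v : Fin k → V, (∀ i, v i ∈ D i) ∧ m ≤ finrank ℚ (span ℚ (Set.range v)) := by
  intro k
  induction k with
  | zero =>
    intro V _ _ _ m D _ H
    have h0 := H ∅
    have he : (⋃ i ∈ (∅ : Finset (Fin 0)), D i) = ∅ := by simp
    rw [he, span_empty, finrank_bot, Finset.card_empty] at h0
    exact ⟨Fin.elim0, fun i => i.elim0, by omega⟩
  | succ k ih =>
    intro V _ _ _ m D hne H
    classical
    set ℓ : Fin (k + 1) := Fin.last k with hℓ
    -- rank of spans of unions over castSucc-indexed families
    set W : Finset (Fin k) → Submodule ℚ V :=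
      fun I => span ℚ (⋃ i ∈ I, D (Fin.castSucc i)) with hW
    have hWmono : ∀ {I J : Finset (Fin k)}, I ⊆ J → W I ≤ W J := by
      intro I J hIJ
      apply span_mono
      exact Set.biUnion_mono (fun i hi => hIJ hi) (fun i _ => le_refl _)
    -- the insert/map bookkeeping
    have hins : ∀ I : Finset (Fin k),
        m + I.card + 1 ≤ finrank ℚ (span ℚ (D ℓ ∪ ⋃ i ∈ I, D (Fin.castSucc i))) + (k + 1) := by
      intro I
      have hnm : ℓ ∉ I.map Fin.castSuccEmb := by
        intro hmem
        rw [Finset.mem_map] at hmem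
        obtain ⟨i, -, hi⟩ := hmem
        exact absurd hi (Fin.castSucc_lt_last i).ne
      have h := H (insert ℓ (I.map Fin.castSuccEmb))
      rw [Finset.card_insert_of_notMem hnm, Finset.card_map] at h
      have hbu : ⋃ j ∈ insert ℓ (I.map Fin.castSuccEmb), D j
          = D ℓ ∪ ⋃ i ∈ I, D (Fin.castSucc i) := by
        rw [Finset.set_biUnion_insert, aux_biUnion_map]
      rw [hbu] at h
      omega
    have H'' : ∀ I : Finset (Fin k), m + I.card ≤ finrank ℚ (W I) + (k + 1) := by
      intro I
      have h := H (I.map Fin.castSuccEmb)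
      rw [Finset.card_map] at h
      have hbu : ⋃ j ∈ I.map Fin.castSuccEmb, D j = ⋃ i ∈ I, D (Fin.castSucc i) :=
        aux_biUnion_map I D
      rw [hbu] at h
      exact h
    -- trivial case m = 0
    rcases Nat.eq_zero_or_pos m with hm0 | hmpos
    · choose v hv using hne
      exact ⟨v, hv, by omega⟩
    obtain ⟨m', rfl⟩ : ∃ m', m = m' + 1 := ⟨m - 1, by omega⟩
    set m := m' + 1 with hmdef
    by_cases hz : ∀ x ∈ D ℓ, x = (0 : V)
    · -- last set is {0}: drop it
      have H' : ∀ I : Finset (Fin k), m + I.card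
          ≤ finrank ℚ (span ℚ (⋃ i ∈ I, D (Fin.castSucc i))) + k := by
        intro I
        have h := hins I
        have hsp : span ℚ (D ℓ ∪ ⋃ i ∈ I, D (Fin.castSucc i))
            = span ℚ (⋃ i ∈ I, D (Fin.castSucc i)) := by
          rw [span_union, span_eq_bot.2 hz, bot_sup_eq]
        rw [hsp] at h
        omega
      obtain ⟨v', hv', hrk⟩ := ih V m (fun i => D (Fin.castSucc i))
        (fun i => hne _) H'
      obtain ⟨x₀, hx₀⟩ := hne ℓ
      refine ⟨Fin.snoc v' x₀, ?_, ?_⟩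
      · intro i
        refine Fin.lastCases ?_ ?_ i
        · simpa using hx₀
        · intro j; simpa using hv' j
      · refine hrk.trans (finrank_mono (span_mono ?_))
        rintro x ⟨i, rfl⟩
        exact ⟨Fin.castSucc i, by simp⟩
    · -- there is a nonzero vector in D ℓ
      push_neg at hz
      obtain ⟨x₁, hx₁D, hx₁⟩ := hz
      -- tight subsets
      set tight : Finset (Fin k) → Prop :=
        fun I => m + I.card = finrank ℚ (W I) + (k + 1) with htightdef
      -- union of two tight sets is tight
      have htu : ∀ {I J : Finset (Fin k)}, tight I → tight J → tight (I ∪ J) := by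
        intro I J hI hJ
        have hWu : W (I ∪ J) = W I ⊔ W J := by
          rw [hW]
          simp only [Finset.set_biUnion_union]
          rw [span_union]
        have hsub : finrank ℚ (W (I ∪ J)) + finrank ℚ ↥(W I ⊓ W J)
            = finrank ℚ (W I) + finrank ℚ (W J) := by
          rw [hWu]; exact Submodule.finrank_sup_add_finrank_inf_eq _ _
        have hinter : finrank ℚ (W (I ∩ J)) ≤ finrank ℚ ↥(W I ⊓ W J) := by
          apply finrank_mono
          exact le_inf (hWmono Finset.inter_subset_left) (hWmono Finset.inter_subset_right)
        have hcards := Finset.card_union_add_card_inter I J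
        have h1 := H'' (I ∪ J)
        have h2 := H'' (I ∩ J)
        rw [htightdef] at hI hJ ⊢
        omega
      -- find v₀ ∈ D ℓ avoiding all tight spans
      have hgood : ∃ v₀ ∈ D ℓ, v₀ ≠ 0 ∧ ∀ I, tight I → v₀ ∉ W I := by
        by_cases hex : ∃ I, tight I
        · obtain ⟨I₁, hI₁⟩ := hex
          -- maximal-cardinality tight set
          obtain ⟨T, hTmem, hTmax⟩ := Finset.exists_max_image
            ((Finset.univ : Finset (Finset (Fin k))).filter tight) Finset.card
            ⟨I₁, by simp only [Finset.mem_filter, Finset.mem_univ, true_and]; exact hI₁⟩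
          rw [Finset.mem_filter] at hTmem
          have hTtight := hTmem.2
          have hTall : ∀ I, tight I → I ⊆ T := by
            intro I hI
            have hu := htu hI hTtight
            have hcard : (I ∪ T).card ≤ T.card := hTmax _
              (by simp only [Finset.mem_filter, Finset.mem_univ, true_and]; exact hu)
            have : I ∪ T = T :=
              (Finset.eq_of_subset_of_card_le Finset.subset_union_right hcard).symm
            exact this ▸ Finset.subset_union_left
          -- some element of D ℓ outside W T
          by_cases hDT : ∀ x ∈ D ℓ, x ∈ W T
          · exfalso
            have h := hins T
            have : span ℚ (D ℓ ∪ ⋃ i ∈ T, D (Fin.castSucc i)) = W T := by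
              rw [span_union]
              have h1 : span ℚ (D ℓ) ≤ W T := span_le.2 hDT
              rw [hW]
              exact sup_eq_right.2 h1
            rw [this] at h
            rw [htightdef] at hTtight
            omega
          · push_neg at hDT
            obtain ⟨v₀, hv₀D, hv₀T⟩ := hDT
            refine ⟨v₀, hv₀D, fun h0 => hv₀T (h0 ▸ (W T).zero_mem), ?_⟩
            intro I hI hmem
            exact hv₀T (hWmono (hTall I hI) hmem)
        · push_neg at hex
          exact ⟨x₁, hx₁D, hx₁, fun I hI => absurd hI (hex I)⟩
      obtain ⟨v₀, hv₀D, hv₀ne, hv₀T⟩ := hgood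
      -- quotient by span of v₀
      set N : Submodule ℚ V := span ℚ {v₀} with hN
      set π := N.mkQ with hπ
      have hkerπ : LinearMap.ker π = N := Submodule.ker_mkQ N
      have hNrank : finrank ℚ N = 1 := finrank_span_singleton hv₀ne
      -- hypothesis in the quotient
      have Hq : ∀ I : Finset (Fin k), m' + I.card
          ≤ finrank ℚ (span ℚ (⋃ i ∈ I, π '' D (Fin.castSucc i))) + k := by
        intro I
        have himg : span ℚ (⋃ i ∈ I, π '' D (Fin.castSucc i)) = (W I).map π := by
          rw [← Set.image_iUnion₂, Submodule.map_span]
        rw [himg]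
        have hrn := aux_finrank_map_add π (W I)
        rw [hkerπ] at hrn
        by_cases hI : tight I
        · have hinf : W I ⊓ N = ⊥ := by
            rw [eq_bot_iff]
            rintro x ⟨hxW, hxN⟩
            obtain ⟨c, rfl⟩ := Submodule.mem_span_singleton.1 hxN
            rcases eq_or_ne c 0 with rfl | hc
            · simp
            · exfalso
              exact hv₀T I hI (by
                have := (W I).smul_mem c⁻¹ hxW
                rwa [smul_smul, inv_mul_cancel₀ hc, one_smul] at this)
          rw [hinf] at hrn
          simp only [finrank_bot, add_zero] at hrn
          rw [htightdef] at hI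
          omega
        · have hle : m + I.card ≤ finrank ℚ (W I) + k := by
            have := H'' I
            rw [htightdef] at hI
            omega
          have hinfle : finrank ℚ ↥(W I ⊓ N) ≤ 1 := by
            calc finrank ℚ ↥(W I ⊓ N) ≤ finrank ℚ N := finrank_mono inf_le_right
            _ = 1 := hNrank
          omega
      obtain ⟨w, hw, hwrk⟩ := ih (V ⧸ N) m' (fun i => π '' D (Fin.castSucc i))
        (fun i => (hne _).image _) Hq
      choose u hu hπu using hw
      set v : Fin (k + 1) → V := Fin.snoc u v₀ with hv
      refine ⟨v, ?_, ?_⟩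
      · intro i
        refine Fin.lastCases ?_ ?_ i
        · simpa [hv] using hv₀D
        · intro j; simpa [hv] using hu j
      · -- rank of the span of the chosen vectors
        set S : Submodule ℚ V := span ℚ (Set.range v) with hS
        have hNS : N ≤ S := by
          rw [hN]
          apply span_le.2
          rintro x rfl
          apply subset_span
          exact ⟨ℓ, by simp [hv, hℓ]⟩
        have hrn := aux_finrank_map_add π S
        rw [hkerπ, inf_eq_right.2 hNS, hNrank] at hrn
        have hmapS : span ℚ (Set.range w) ≤ S.map π := by
          rw [hS, Submodule.map_span]
          apply span_mono
          rintro x ⟨i, rfl⟩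
          exact ⟨v (Fin.castSucc i), ⟨Fin.castSucc i, rfl⟩, by simp [hv, hπu i]⟩
        have h1 : m' ≤ finrank ℚ (S.map π) := hwrk.trans (finrank_mono hmapS)
        omega

lemma aux_finrank_biSup_le {V : Type} [AddCommGroup V] [Module ℚ V] [FiniteDimensional ℚ V]
    {k : ℕ} (J : Finset (Fin k)) (Wf : Fin k → Submodule ℚ V) (hWf : ∀ i, finrank ℚ (Wf i) ≤ 1) :
    finrank ℚ ↥(⨆ i ∈ J, Wf i) ≤ J.card := by
  classical
  induction J using Finset.induction_on with
  | empty => simp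
  | @insert a s ha ihs =>
    rw [Finset.iSup_insert, Finset.card_insert_of_notMem ha]
    calc finrank ℚ ↥(Wf a ⊔ ⨆ i ∈ s, Wf i)
        ≤ finrank ℚ (Wf a) + finrank ℚ ↥(⨆ i ∈ s, Wf i) :=
          Submodule.finrank_add_le_finrank_add_finrank _ _
      _ ≤ 1 + s.card := add_le_add (hWf a) ihs
      _ ≤ s.card + 1 := by omega

/-- The two combinatorial formulas for the codimension of the sparse resultant agree:
for finite point configurations `A 1, ..., A k` in `ℚ^n`, each with at least two points,
the maximum over tuples `E = (E 1, ..., E k)` of two-element subsets `E i ⊆ A i` of the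
dimension (of the affine span) of the Minkowski sum `conv (E 1) + ⋯ + conv (E k)`
equals the minimum over subsets `I ⊆ {1, ..., k}` of
`dim (∑_{i ∈ I} conv (A i)) + k - |I|`. -/
theorem resultant_codim_formulas_agree (n k : ℕ)
    (A : Fin k → Finset (Fin n → ℚ)) (hA : ∀ i, 2 ≤ (A i).card) :
    sSup {d : ℕ | ∃ E : Fin k → Finset (Fin n → ℚ),
        (∀ i, E i ⊆ A i ∧ (E i).card = 2) ∧
        d = Module.finrank ℚ
          ↥(vectorSpan ℚ (∑ i : Fin k, convexHull ℚ (↑(E i) : Set (Fin n → ℚ))))} =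
    sInf {d : ℕ | ∃ I : Finset (Fin k),
        d = Module.finrank ℚ
          ↥(vectorSpan ℚ (∑ i ∈ I, convexHull ℚ (↑(A i) : Set (Fin n → ℚ))))
          + (k - I.card)} := by
  classical
  have hAne : ∀ i, ((A i : Set (Fin n → ℚ))).Nonempty := fun i =>
    Finset.coe_nonempty.2 (Finset.card_pos.1 (by have := hA i; omega))
  -- rewriting the vectorSpan of a Minkowski sum of convex hulls
  have hVS : ∀ (I : Finset (Fin k)) (C : Fin k → Finset (Fin n → ℚ)),
      (∀ i, ((C i : Set (Fin n → ℚ))).Nonempty) →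
      vectorSpan ℚ (∑ i ∈ I, convexHull ℚ ((C i : Set (Fin n → ℚ))))
        = ⨆ i ∈ I, vectorSpan ℚ ((C i : Set (Fin n → ℚ))) := by
    intro I C hC
    rw [aux_vectorSpan_sum I _ (fun i _ => ⟨_, subset_convexHull ℚ _ (hC i).choose_spec⟩)]
    exact iSup_congr fun i => iSup_congr fun _ => aux_vectorSpan_convexHull _
  -- the two sets
  set S := {d : ℕ | ∃ E : Fin k → Finset (Fin n → ℚ),
        (∀ i, E i ⊆ A i ∧ (E i).card = 2) ∧
        d = Module.finrank ℚ
          ↥(vectorSpan ℚ (∑ i : Fin k, convexHull ℚ (↑(E i) : Set (Fin n → ℚ))))} with hSdef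
  set T := {d : ℕ | ∃ I : Finset (Fin k),
        d = Module.finrank ℚ
          ↥(vectorSpan ℚ (∑ i ∈ I, convexHull ℚ (↑(A i) : Set (Fin n → ℚ))))
          + (k - I.card)} with hTdef
  have hTne : T.Nonempty := ⟨_, ∅, rfl⟩
  have hSne : S.Nonempty := by
    choose E hE hEcard using fun i => Finset.exists_subset_card_eq (hA i)
    exact ⟨_, E, fun i => ⟨hE i, hEcard i⟩, rfl⟩
  have hSbdd : BddAbove S := by
    refine ⟨n, ?_⟩
    rintro d ⟨E, -, rfl⟩
    calc finrank ℚ ↥(vectorSpan ℚ (∑ i : Fin k, convexHull ℚ ((E i : Set (Fin n → ℚ)))))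
        ≤ finrank ℚ (Fin n → ℚ) := Submodule.finrank_le _
      _ = n := finrank_fin_fun ℚ
  apply le_antisymm
  · -- easy direction
    apply csSup_le hSne
    rintro d ⟨E, hE, rfl⟩
    apply le_csInf hTne
    rintro e ⟨I, rfl⟩
    have hEne : ∀ i, ((E i : Set (Fin n → ℚ))).Nonempty := fun i =>
      Finset.coe_nonempty.2 (Finset.card_pos.1 (by rw [(hE i).2]; norm_num))
    rw [hVS Finset.univ E hEne, hVS I A hAne]
    have hE1 : ∀ i, finrank ℚ (vectorSpan ℚ ((E i : Set (Fin n → ℚ)))) ≤ 1 := by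
      intro i
      obtain ⟨x, y, hxy, hExy⟩ := Finset.card_eq_two.1 (hE i).2
      rw [hExy, Finset.coe_insert, Finset.coe_singleton, vectorSpan_pair]
      rw [finrank_span_singleton (vsub_ne_zero.2 hxy)]
    have h1 : (⨆ i ∈ Finset.univ, vectorSpan ℚ ((E i : Set (Fin n → ℚ))))
        ≤ (⨆ i ∈ I, vectorSpan ℚ ((A i : Set (Fin n → ℚ))))
          ⊔ (⨆ i ∈ Iᶜ, vectorSpan ℚ ((E i : Set (Fin n → ℚ)))) := by
      refine iSup₂_le fun i _ => ?_
      by_cases hi : i ∈ I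
      · exact le_sup_of_le_left
          ((vectorSpan_mono ℚ (Finset.coe_subset.2 (hE i).1)).trans
            (le_iSup₂ (f := fun i (_ : i ∈ I) =>
              vectorSpan ℚ ((A i : Set (Fin n → ℚ)))) i hi))
      · exact le_sup_of_le_right
          (le_iSup₂ (f := fun i (_ : i ∈ Iᶜ) =>
            vectorSpan ℚ ((E i : Set (Fin n → ℚ)))) i (Finset.mem_compl.2 hi))
    calc finrank ℚ ↥(⨆ i ∈ Finset.univ, vectorSpan ℚ ((E i : Set (Fin n → ℚ))))
        ≤ finrank ℚ ↥((⨆ i ∈ I, vectorSpan ℚ ((A i : Set (Fin n → ℚ))))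
            ⊔ (⨆ i ∈ Iᶜ, vectorSpan ℚ ((E i : Set (Fin n → ℚ))))) := finrank_mono h1
      _ ≤ finrank ℚ ↥(⨆ i ∈ I, vectorSpan ℚ ((A i : Set (Fin n → ℚ))))
            + finrank ℚ ↥(⨆ i ∈ Iᶜ, vectorSpan ℚ ((E i : Set (Fin n → ℚ)))) :=
          Submodule.finrank_add_le_finrank_add_finrank _ _
      _ ≤ finrank ℚ ↥(⨆ i ∈ I, vectorSpan ℚ ((A i : Set (Fin n → ℚ)))) + (k - I.card) := by
          refine Nat.add_le_add_left ?_ _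
          refine (aux_finrank_biSup_le Iᶜ _ hE1).trans ?_
          rw [Finset.card_compl, Fintype.card_fin]
  · -- hard direction via Perfect's theorem
    set D : Fin k → Set (Fin n → ℚ) :=
      fun i => {x | ∃ a ∈ A i, ∃ b ∈ A i, a ≠ b ∧ x = a - b} with hD
    have hDne : ∀ i, (D i).Nonempty := by
      intro i
      obtain ⟨a, ha, b, hb, hab⟩ := Finset.one_lt_card.1 (hA i)
      exact ⟨a - b, a, ha, b, hb, hab, rfl⟩
    have hDspan : ∀ i, span ℚ (D i) = vectorSpan ℚ ((A i : Set (Fin n → ℚ))) := by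
      intro i
      apply le_antisymm
      · rw [span_le]
        rintro x ⟨a, ha, b, hb, -, rfl⟩
        exact vsub_mem_vectorSpan ℚ ha hb
      · rw [vectorSpan_def, span_le]
        rintro x hx
        rw [Set.mem_vsub] at hx
        obtain ⟨a, ha, b, hb, rfl⟩ := hx
        rcases eq_or_ne a b with rfl | hab
        · rw [vsub_eq_sub, sub_self]
          exact (span ℚ (D i)).zero_mem
        · exact subset_span ⟨a, ha, b, hb, hab, (vsub_eq_sub a b)⟩
    set m := sInf T with hm
    have Hyp : ∀ I : Finset (Fin k),
        m + I.card ≤ finrank ℚ (span ℚ (⋃ i ∈ I, D i)) + k := by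
      intro I
      have h1 : m ≤ finrank ℚ
          ↥(vectorSpan ℚ (∑ i ∈ I, convexHull ℚ ((A i : Set (Fin n → ℚ)))))
          + (k - I.card) := Nat.sInf_le ⟨I, rfl⟩
      have h2 : span ℚ (⋃ i ∈ I, D i)
          = vectorSpan ℚ (∑ i ∈ I, convexHull ℚ ((A i : Set (Fin n → ℚ)))) := by
        rw [Submodule.span_iUnion₂, hVS I A hAne]
        exact iSup_congr fun i => iSup_congr fun _ => hDspan i
      rw [h2]
      have h3 : I.card ≤ k := by
        have := Finset.card_le_univ I
        simpa using this
      omega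
    obtain ⟨v, hv, hrk⟩ := aux_perfect k (Fin n → ℚ) m D hDne Hyp
    choose a ha b hb hab hvab using hv
    have hdS : finrank ℚ (span ℚ (Set.range v)) ∈ S := by
      refine ⟨fun i => ({a i, b i} : Finset (Fin n → ℚ)), fun i =>
        ⟨Finset.insert_subset (ha i) (Finset.singleton_subset_iff.2 (hb i)),
          Finset.card_pair (hab i)⟩, ?_⟩
      rw [hVS Finset.univ _ (fun i => ⟨a i, by simp⟩)]
      rw [span_range_eq_iSup]
      have : ∀ i : Fin k,
          vectorSpan ℚ ((({a i, b i} : Finset (Fin n → ℚ)) : Set (Fin n → ℚ)))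
            = span ℚ {v i} := by
        intro i
        rw [Finset.coe_insert, Finset.coe_singleton, vectorSpan_pair, vsub_eq_sub, ← hvab i]
      rw [iSup_congr fun i => iSup_congr fun _ => this i]
      have huniv : (⨆ i ∈ (Finset.univ : Finset (Fin k)), span ℚ {v i}
          : Submodule ℚ (Fin n → ℚ)) = ⨆ i, span ℚ {v i} := by
        apply le_antisymm
        · exact iSup₂_le fun i _ => le_iSup (fun i => span ℚ {v i}) i
        · exact iSup_le fun i => le_iSup₂ (f := fun i (_ : i ∈ (Finset.univ : Finset (Fin k)))
            => span ℚ {v i}) i (Finset.mem_univ i)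
      rw [huniv]
    exact le_trans hrk (le_csSup hSbdd hdS)
end

section
/- Define a collection of subsets of a family of polytopes P_1, ..., P_k in ℝ^n to be independent if a set of polytopes {P_i : i ∈ I} is independent when there exist vectors v_i, each v_i being a difference of two points of P_i, such that {v_i : i ∈ I} is linearly independent. Then this independence system satisfies the matroid base exchange axiom, i.e., it defines a matroid on {1,...,k}. -/
/-- A set of indices `I` of polytopes `P 1, ..., P k` in `ℝ^n` is independent if one can
choose, for each `i ∈ I`, a vector `v i` which is a difference of two points of `P i`,
such that the chosen vectors are linearly independent. -/
def PolytopeIndep {n k : ℕ} (P : Fin k → Set (Fin n → ℝ)) (I : Finset (Fin k)) : Prop :=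
  ∃ v : Fin k → (Fin n → ℝ),
    (∀ i ∈ I, ∃ p ∈ P i, ∃ q ∈ P i, v i = p - q) ∧
    LinearIndependent ℝ (fun i : ↥(↑I : Set (Fin k)) => v ↑i)

/-- Key step: since `|I| < |J|` and the `w`-vectors of `J` are linearly independent, some
element of `J` has its vector outside the span of `v '' I`. -/
lemma polytope_exists_outside {n k : ℕ} (I J : Finset (Fin k)) (v w : Fin k → Fin n → ℝ)
    (hw : LinearIndependent ℝ (fun i : ↥(↑J : Set (Fin k)) => w ↑i))
    (hcard : I.card < J.card) :
    ∃ j ∈ J, w j ∉ Submodule.span ℝ (v '' ↑I) := by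
  by_contra h
  push_neg at h
  set N := Submodule.span ℝ (v '' (↑I : Set (Fin k))) with hN
  have hb : LinearIndependent ℝ (fun j : ↥(↑J : Set (Fin k)) => (⟨w j, h j j.2⟩ : N)) :=
    LinearIndependent.of_comp N.subtype hw
  have h2 : J.card ≤ Module.finrank ℝ N := by simpa using hb.fintype_card_le_finrank
  have h1 : Set.finrank ℝ (↑(I.image v) : Set (Fin n → ℝ)) ≤ (I.image v).card :=
    finrank_span_finset_le_card _
  rw [Set.finrank, Finset.coe_image] at h1
  have h3 : Module.finrank ℝ N ≤ I.card := h1.trans Finset.card_image_le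
  omega

open Classical in
/-- The main induction: given representations `v` of `I` and `w` of `J`, by induction on the
number of indices in `I ∩ J` where `v` and `w` disagree, we find an exchange element. -/
lemma polytope_aux {n k : ℕ} (P : Fin k → Set (Fin n → ℝ)) (J : Finset (Fin k))
    (w : Fin k → Fin n → ℝ)
    (hwD : ∀ i ∈ J, ∃ p ∈ P i, ∃ q ∈ P i, w i = p - q)
    (hw : LinearIndependent ℝ (fun i : ↥(↑J : Set (Fin k)) => w ↑i)) :
    ∀ (d : ℕ) (I : Finset (Fin k)) (v : Fin k → Fin n → ℝ),
      ((I ∩ J).filter (fun i => v i ≠ w i)).card ≤ d →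
      (∀ i ∈ I, ∃ p ∈ P i, ∃ q ∈ P i, v i = p - q) →
      LinearIndependent ℝ (fun i : ↥(↑I : Set (Fin k)) => v ↑i) →
      I.card < J.card →
      ∃ x ∈ J, x ∉ I ∧ PolytopeIndep P (insert x I) := by
  intro d
  induction d using Nat.strong_induction_on with
  | _ d IH =>
  intro I v hmeas hvD hv hcard
  obtain ⟨j, hjJ, hj⟩ := polytope_exists_outside I J v w hw hcard
  by_cases hjI : j ∈ I
  · -- `j` is already in `I`: replace `v j` by `w j` and recurse.
    have hvjw : v j ≠ w j := by
      intro h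
      exact hj (h ▸ Submodule.subset_span ⟨j, hjI, rfl⟩)
    set v' := Function.update v j (w j) with hv'
    have hIset : (insert j ((↑I : Set (Fin k)) \ {j})) = (↑I : Set (Fin k)) := by
      rw [Set.insert_diff_singleton, Set.insert_eq_self.2 (by exact_mod_cast hjI)]
    have hjnot : j ∉ ((↑I : Set (Fin k)) \ {j}) := fun h => h.2 rfl
    have hvset : LinearIndependent ℝ
        (fun i : ↥(insert j ((↑I : Set (Fin k)) \ {j})) => v ↑i) := by
      rw [hIset]; exact hv
    have hsplit := (linearIndepOn_insert hjnot).mp hvset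
    have hv'indep : LinearIndependent ℝ (fun i : ↥(↑I : Set (Fin k)) => v' ↑i) := by
      rw [← hIset]
      refine (linearIndepOn_insert hjnot).mpr ⟨?_, ?_⟩
      · have heqfam : (fun i : ↥((↑I : Set (Fin k)) \ {j}) => v' ↑i)
            = (fun i : ↥((↑I : Set (Fin k)) \ {j}) => v ↑i) := by
          funext i
          exact Function.update_of_ne i.2.2 _ _
        rw [LinearIndepOn, heqfam]; exact hsplit.1
      · have himg : v' '' ((↑I : Set (Fin k)) \ {j}) = v '' ((↑I : Set (Fin k)) \ {j}) :=
          Set.image_congr fun i hi => Function.update_of_ne hi.2 _ _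
        rw [himg, hv', Function.update_self]
        intro hmem
        exact hj (Submodule.span_mono (Set.image_mono Set.diff_subset) hmem)
    have hv'D : ∀ i ∈ I, ∃ p ∈ P i, ∃ q ∈ P i, v' i = p - q := by
      intro i hi
      by_cases h : i = j
      · subst h
        obtain ⟨p, hp, q, hq, hpq⟩ := hwD i hjJ
        exact ⟨p, hp, q, hq, by rw [hv', Function.update_self]; exact hpq⟩
      · obtain ⟨p, hp, q, hq, hpq⟩ := hvD i hi
        exact ⟨p, hp, q, hq, by rw [hv', Function.update_of_ne h]; exact hpq⟩
    have hjmem : j ∈ (I ∩ J).filter (fun i => v i ≠ w i) := by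
      simp [hjI, hjJ, hvjw]
    have hsub : (I ∩ J).filter (fun i => v' i ≠ w i)
        ⊆ ((I ∩ J).filter (fun i => v i ≠ w i)).erase j := by
      intro i hi
      simp only [Finset.mem_filter, Finset.mem_erase] at hi ⊢
      have hij : i ≠ j := by
        intro h; subst h
        exact hi.2 (by rw [hv', Function.update_self])
      obtain ⟨hiIJ, hine⟩ := hi
      rw [hv', Function.update_of_ne hij] at hine
      exact ⟨hij, hiIJ, hine⟩
    have hlt : ((I ∩ J).filter (fun i => v' i ≠ w i)).card < d := by
      have h1 := Finset.card_le_card hsub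
      have h2 := Finset.card_erase_of_mem hjmem
      have h3 : 0 < ((I ∩ J).filter (fun i => v i ≠ w i)).card :=
        Finset.card_pos.2 ⟨j, hjmem⟩
      omega
    exact IH _ hlt I v' le_rfl hv'D hv'indep hcard
  · -- `j ∉ I`: it is the exchange element.
    refine ⟨j, hjJ, hjI, ?_⟩
    set u := Function.update v j (w j) with hu
    refine ⟨u, ?_, ?_⟩
    · intro i hi
      rcases Finset.mem_insert.mp hi with h | h
      · subst h
        obtain ⟨p, hp, q, hq, hpq⟩ := hwD i hjJ
        exact ⟨p, hp, q, hq, by rw [hu, Function.update_self]; exact hpq⟩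
      · obtain ⟨p, hp, q, hq, hpq⟩ := hvD i h
        have hij : i ≠ j := fun he => hjI (he ▸ h)
        exact ⟨p, hp, q, hq, by rw [hu, Function.update_of_ne hij]; exact hpq⟩
    · have hcoe : (↑(insert j I) : Set (Fin k)) = insert j (↑I : Set (Fin k)) :=
        Finset.coe_insert _ _
      rw [hcoe]
      have hjnot : j ∉ (↑I : Set (Fin k)) := by exact_mod_cast hjI
      refine (linearIndepOn_insert hjnot).mpr ⟨?_, ?_⟩
      · have heqfam : (fun i : ↥(↑I : Set (Fin k)) => u ↑i)
            = (fun i : ↥(↑I : Set (Fin k)) => v ↑i) := by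
          funext i
          exact Function.update_of_ne (fun h => hjnot (by rw [← h]; exact i.2)) _ _
        rw [LinearIndepOn, heqfam]; exact hv
      · have himg : u '' (↑I : Set (Fin k)) = v '' (↑I : Set (Fin k)) :=
          Set.image_congr fun i hi => Function.update_of_ne (fun h => hjnot (by rw [← h]; exact hi)) _ _
        rw [himg, hu, Function.update_self]
        exact hj

/-- The independence system on a family of polytopes, where a subfamily is independent
when it contains independent line segments (difference vectors), satisfies the matroid
exchange axiom: any independent set can be augmented from any larger independent set.
Hence it defines a matroid on `{1, ..., k}`. -/
theorem polytopeIndep_exchange {n k : ℕ} (P : Fin k → Set (Fin n → ℝ))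
    (I J : Finset (Fin k)) (hI : PolytopeIndep P I) (hJ : PolytopeIndep P J)
    (hcard : I.card < J.card) :
    ∃ x ∈ J, x ∉ I ∧ PolytopeIndep P (insert x I) := by
  obtain ⟨v, hvD, hv⟩ := hI
  obtain ⟨w, hwD, hw⟩ := hJ
  exact polytope_aux P J w hwD hw _ I v le_rfl hvD hv hcard
end

section
/- Let A_1, ..., A_k be finite subsets of ℚ^n, and let L_i denote the linear space spanned by all differences of points of A_i. Then max over tuples E (E_i a two-element subset of A_i) of dim(span(e_1,...,e_k)), where e_i is the difference of the two points of E_i, equals max over tuples (v_1,...,v_k) ∈ L_1 × ... × L_k of dim(span(v_1,...,v_k)). -/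
open Submodule Module Set

section helpers

variable {K V : Type*} [Field K] [AddCommGroup V] [Module K V] [FiniteDimensional K V]

lemma finrank_sup_span_singleton (W : Submodule K V) {x : V} (hx : x ∉ W) :
    finrank K ↥(W ⊔ K ∙ x) = finrank K W + 1 := by
  have hx0 : x ≠ 0 := fun h => hx (h ▸ W.zero_mem)
  have hdis : Disjoint W (K ∙ x) := (Submodule.disjoint_span_singleton' hx0).2 hx
  have := Submodule.finrank_sup_add_finrank_inf_eq W (K ∙ x)
  rw [hdis.eq_bot] at this
  simp [finrank_span_singleton hx0] at this
  omega

set_option linter.unusedSectionVars false in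
lemma range_eq_insert_image {k : ℕ} (v : Fin k → V) (i : Fin k) :
    Set.range v = insert (v i) (v '' {j | j ≠ i}) := by
  ext y
  constructor
  · rintro ⟨j, rfl⟩
    by_cases h : j = i
    · subst h; exact Or.inl rfl
    · exact Or.inr ⟨j, h, rfl⟩
  · rintro (rfl | ⟨j, _, rfl⟩) <;> exact ⟨_, rfl⟩

lemma exchange_step {k : ℕ} (v : Fin k → V) (i : Fin k) (S : Set V)
    (hne : S.Nonempty) (hv : v i ∈ Submodule.span K S) :
    ∃ s ∈ S, finrank K ↥(Submodule.span K (Set.range v)) ≤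
      finrank K ↥(Submodule.span K (Set.range (Function.update v i s))) := by
  have him : ∀ s : V, Set.range (Function.update v i s) = insert s (v '' {j | j ≠ i}) := by
    intro s
    rw [range_eq_insert_image (Function.update v i s) i, Function.update_self]
    congr 1
    exact Set.image_congr fun j hj => Function.update_of_ne hj s v
  set W := Submodule.span K (v '' {j | j ≠ i}) with hW
  by_cases hvi : v i ∈ W
  · obtain ⟨s, hs⟩ := hne
    refine ⟨s, hs, Submodule.finrank_mono ?_⟩
    rw [range_eq_insert_image v i, span_insert_eq_span hvi, him s]
    exact span_mono (Set.subset_insert _ _)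
  · have hex : ∃ s ∈ S, s ∉ W := by
      by_contra h
      push_neg at h
      exact hvi (Submodule.span_le.mpr h hv)
    obtain ⟨s, hsS, hsW⟩ := hex
    refine ⟨s, hsS, le_of_eq ?_⟩
    rw [range_eq_insert_image v i, him s, Submodule.span_insert, Submodule.span_insert,
      sup_comm (K ∙ v i), sup_comm (K ∙ s), ← hW,
      finrank_sup_span_singleton W hvi, finrank_sup_span_singleton W hsW]

lemma exchange_iterate {k : ℕ} (v : Fin k → V) (S : Fin k → Set V)
    (hne : ∀ i, (S i).Nonempty) (hv : ∀ i, v i ∈ Submodule.span K (S i)) :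
    ∃ v' : Fin k → V, (∀ i, v' i ∈ S i) ∧
      finrank K ↥(Submodule.span K (Set.range v)) ≤
        finrank K ↥(Submodule.span K (Set.range v')) := by
  have key : ∀ m : ℕ, ∃ v' : Fin k → V,
      (∀ j : Fin k, (j : ℕ) < m → v' j ∈ S j) ∧
      (∀ j : Fin k, ¬ ((j : ℕ) < m) → v' j = v j) ∧
      finrank K ↥(Submodule.span K (Set.range v)) ≤
        finrank K ↥(Submodule.span K (Set.range v')) := by
    intro m
    induction m with
    | zero => exact ⟨v, fun j hj => absurd hj (by omega), fun j _ => rfl, le_rfl⟩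
    | succ m ih =>
      obtain ⟨v', h1, h2, h3⟩ := ih
      by_cases hm : m < k
      · set i : Fin k := ⟨m, hm⟩
        have hvi : v' i ∈ Submodule.span K (S i) := by
          rw [h2 i (by simp [i])]
          exact hv i
        obtain ⟨s, hsS, hle⟩ := exchange_step v' i (S i) (hne i) hvi
        refine ⟨Function.update v' i s, ?_, ?_, h3.trans hle⟩
        · intro j hj
          by_cases hji : j = i
          · subst hji; rw [Function.update_self]; exact hsS
          · rw [Function.update_of_ne hji]
            refine h1 j ?_
            have : (j : ℕ) ≠ m := fun h => hji (Fin.ext h)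
            omega
        · intro j hj
          have hjm : (j : ℕ) ≠ m := by omega
          have hji : j ≠ i := fun h => hjm (by rw [h])
          rw [Function.update_of_ne hji]
          exact h2 j (by omega)
      · refine ⟨v', fun j hj => h1 j (by omega), fun j hj => h2 j (by omega), h3⟩
  obtain ⟨v', h1, _, h3⟩ := key k
  exact ⟨v', fun i => h1 i i.isLt, h3⟩

end helpers

/-- The codimension formula for the resultant depends only on the spans of the
configurations: for finite subsets `A 1, ..., A k` of `ℚ^n` with `L i` the linear span of
all differences of points of `A i`, the maximal dimension of `span (e 1, ..., e k)` over
tuples `E` of two-element subsets `E i ⊆ A i` (with `e i` the difference of the two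
points of `E i`) equals the maximal dimension of `span (v 1, ..., v k)` over tuples
`(v 1, ..., v k) ∈ L 1 × ⋯ × L k`. -/
theorem codim_depends_only_on_spans (n k : ℕ) (A : Fin k → Finset (Fin n → ℚ))
    (hA : ∀ i, 2 ≤ (A i).card) :
    sSup {d : ℕ | ∃ p q : Fin k → (Fin n → ℚ),
        (∀ i, p i ∈ A i ∧ q i ∈ A i ∧ p i ≠ q i) ∧
        d = Module.finrank ℚ ↥(Submodule.span ℚ (Set.range fun i => p i - q i))} =
    sSup {d : ℕ | ∃ v : Fin k → (Fin n → ℚ),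
        (∀ i, v i ∈ Submodule.span ℚ
          {w : Fin n → ℚ | ∃ x ∈ A i, ∃ y ∈ A i, w = x - y}) ∧
        d = Module.finrank ℚ ↥(Submodule.span ℚ (Set.range v))} := by
  set LHS := {d : ℕ | ∃ p q : Fin k → (Fin n → ℚ),
        (∀ i, p i ∈ A i ∧ q i ∈ A i ∧ p i ≠ q i) ∧
        d = Module.finrank ℚ ↥(Submodule.span ℚ (Set.range fun i => p i - q i))} with hLHS
  set RHS := {d : ℕ | ∃ v : Fin k → (Fin n → ℚ),
        (∀ i, v i ∈ Submodule.span ℚ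
          {w : Fin n → ℚ | ∃ x ∈ A i, ∃ y ∈ A i, w = x - y}) ∧
        d = Module.finrank ℚ ↥(Submodule.span ℚ (Set.range v))} with hRHS
  -- distinct points exist
  have hpq : ∀ i, ∃ x ∈ A i, ∃ y ∈ A i, x ≠ y := by
    intro i
    obtain ⟨x, hx, y, hy, hxy⟩ := Finset.one_lt_card.mp (hA i)
    exact ⟨x, hx, y, hy, hxy⟩
  -- bounds
  have hbddR : BddAbove RHS := by
    refine ⟨n, fun d hd => ?_⟩
    obtain ⟨v, _, rfl⟩ := hd
    calc Module.finrank ℚ ↥(Submodule.span ℚ (Set.range v))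
        ≤ Module.finrank ℚ (Fin n → ℚ) := Submodule.finrank_le _
      _ = n := by simp
  have hbddL : BddAbove LHS := by
    refine ⟨n, fun d hd => ?_⟩
    obtain ⟨p, q, _, rfl⟩ := hd
    calc Module.finrank ℚ ↥(Submodule.span ℚ (Set.range fun i => p i - q i))
        ≤ Module.finrank ℚ (Fin n → ℚ) := Submodule.finrank_le _
      _ = n := by simp
  have hLne : LHS.Nonempty := by
    choose p hp q hq hne' using hpq
    exact ⟨_, p, q, fun i => ⟨hp i, hq i, hne' i⟩, rfl⟩
  have hsub : LHS ⊆ RHS := by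
    rintro d ⟨p, q, hpq', rfl⟩
    refine ⟨fun i => p i - q i, fun i => Submodule.subset_span ?_, rfl⟩
    exact ⟨p i, (hpq' i).1, q i, (hpq' i).2.1, rfl⟩
  refine le_antisymm (csSup_le_csSup hbddR hLne hsub) ?_
  refine csSup_le (hLne.mono hsub) ?_
  rintro d ⟨v, hv, rfl⟩
  set S : Fin k → Set (Fin n → ℚ) :=
    fun i => {w | ∃ x ∈ A i, ∃ y ∈ A i, x ≠ y ∧ w = x - y} with hS
  have hSne : ∀ i, (S i).Nonempty := by
    intro i
    obtain ⟨x, hx, y, hy, hxy⟩ := hpq i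
    exact ⟨x - y, x, hx, y, hy, hxy, rfl⟩
  have hv' : ∀ i, v i ∈ Submodule.span ℚ (S i) := by
    intro i
    refine (le_of_le_of_eq (Submodule.span_mono ?_) (Submodule.span_insert_zero)) (hv i)
    rintro w ⟨x, hx, y, hy, rfl⟩
    by_cases hxy : x = y
    · subst hxy; simp
    · exact Or.inr ⟨x, hx, y, hy, hxy, rfl⟩
  obtain ⟨v', hv'S, hle⟩ := exchange_iterate v S hSne hv'
  choose p hp q hq hpq2 hvpq using hv'S
  have hv'eq : v' = fun i => p i - q i := funext hvpq
  exact hle.trans (le_csSup hbddL ⟨p, q, fun i => ⟨hp i, hq i, hpq2 i⟩, by rw [← hv'eq]⟩)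
end

section
/- Let A_1, ..., A_k be finite indexed families of points in ℤ^n with A_i = (a_{i,1},...,a_{i,m_i}), m = Σ m_i, and let Cay(A) be the Cayley matrix in ℤ^{(k+n) × m} whose column indexed (i,j) is (e_i, a_{i,j}). Fix a tuple E = (E_1,...,E_k) with each E_i a two-element subset of {1,...,m_i}. Then the following two subsets of ℝ^m are equal: (1) the set of coefficient vectors w = (w_{i,j}) such that there exists x ∈ ℝ^n with, for every i, the minimum of w_{i,j} + a_{i,j}·x over j attained at both indices of E_i (and hence at least at those); (2) the cone ℝ_{≥0}{e_{i,j} : j ∉ E_i} + rowspace(Cay(A)). -/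
/-- The correspondence lemma for tropical resultants.  Let `A 1, ..., A k` be finite
indexed families of points `a i j ∈ ℤ^n` (`j < m i`), and fix a tuple `E` of two-element
subsets `E i ⊆ {1, ..., m i}`.  Then the set of coefficient vectors `w ∈ ℝ^m`
(`m = ∑ m i`) for which some `x ∈ ℝ^n` attains, for every `i`, the minimum of
`w (i,j) + a i j · x` at both indices of `E i`, equals the cone
`ℝ_{≥0}{e (i,j) : j ∉ E i} + rowspace (Cay A)`, where `Cay A` is the Cayley matrix whose
column `(i,j)` is `(e i, a i j)`. -/
theorem correspondence_lemma (k n : ℕ) (m : Fin k → ℕ)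
    (a : ∀ i : Fin k, Fin (m i) → (Fin n → ℤ))
    (E : ∀ i : Fin k, Finset (Fin (m i))) (hE : ∀ i, (E i).card = 2) :
    {w : ((i : Fin k) × Fin (m i)) → ℝ | ∃ x : Fin n → ℝ, ∀ i : Fin k,
        ∀ j' ∈ E i, ∀ j : Fin (m i),
          w ⟨i, j'⟩ + ∑ t, (a i j' t : ℝ) * x t ≤ w ⟨i, j⟩ + ∑ t, (a i j t : ℝ) * x t} =
    {w : ((i : Fin k) × Fin (m i)) → ℝ | ∃ c : ((i : Fin k) × Fin (m i)) → ℝ,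
        (∀ p, 0 ≤ c p) ∧ (∀ p, p.2 ∈ E p.1 → c p = 0) ∧
        ∃ u ∈ Submodule.span ℝ
          ((Set.range fun i0 : Fin k =>
              fun p : (i : Fin k) × Fin (m i) => if p.1 = i0 then (1 : ℝ) else 0) ∪
           (Set.range fun l : Fin n =>
              fun p : (i : Fin k) × Fin (m i) => (a p.1 p.2 l : ℝ))),
          w = c + u} := by
  ext w
  simp only [Set.mem_setOf_eq]
  constructor
  · rintro ⟨x, hx⟩
    have hne : ∀ i, (E i).Nonempty := fun i => Finset.card_pos.mp (by rw [hE i]; norm_num)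
    choose j0 hj0 using hne
    set μ : Fin k → ℝ := fun i => w ⟨i, j0 i⟩ + ∑ t, (a i (j0 i) t : ℝ) * x t with hμ
    set u : ((i : Fin k) × Fin (m i)) → ℝ :=
      fun p => μ p.1 - ∑ t, (a p.1 p.2 t : ℝ) * x t with hu
    refine ⟨w - u, ?_, ?_, u, ?_, by funext p; simp⟩
    · intro p
      have := hx p.1 (j0 p.1) (hj0 p.1) p.2
      simp only [Pi.sub_apply, hu, hμ, sub_nonneg]
      linarith
    · intro p hp
      have h1 := hx p.1 (j0 p.1) (hj0 p.1) p.2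
      have h2 := hx p.1 p.2 hp (j0 p.1)
      simp only [Pi.sub_apply, hu, hμ]
      linarith
    · have hrep : u = (∑ i0 : Fin k, μ i0 •
          (fun p : (i : Fin k) × Fin (m i) => if p.1 = i0 then (1:ℝ) else 0))
          + (∑ l : Fin n, (-(x l)) •
          (fun p : (i : Fin k) × Fin (m i) => (a p.1 p.2 l : ℝ))) := by
        funext p
        simp only [Pi.add_apply, Finset.sum_apply, Pi.smul_apply, smul_eq_mul,
          mul_ite, mul_one, mul_zero, Finset.sum_ite_eq, Finset.mem_univ, if_true, hu]
        have : ∑ l, (-(x l)) * (a p.1 p.2 l : ℝ) = -∑ t, (a p.1 p.2 t : ℝ) * x t := by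
          rw [← Finset.sum_neg_distrib]
          exact Finset.sum_congr rfl fun _ _ => by ring
        rw [this]; ring
      rw [hrep]
      exact add_mem
        (Submodule.sum_mem _ fun i0 _ => Submodule.smul_mem _ _
          (Submodule.subset_span (Or.inl ⟨i0, rfl⟩)))
        (Submodule.sum_mem _ fun l _ => Submodule.smul_mem _ _
          (Submodule.subset_span (Or.inr ⟨l, rfl⟩)))
  · rintro ⟨c, hc0, hcE, u, hu, rfl⟩
    have key : ∃ lam : Fin k → ℝ, ∃ x : Fin n → ℝ,
        ∀ p, u p = lam p.1 + ∑ l, (a p.1 p.2 l : ℝ) * x l := by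
      induction hu using Submodule.span_induction with
      | mem v hv =>
        rcases hv with ⟨i0, rfl⟩ | ⟨l, rfl⟩
        · exact ⟨fun i => if i = i0 then 1 else 0, 0, fun p => by simp⟩
        · refine ⟨0, Pi.single l 1, fun p => by
            simp [Pi.single_apply, mul_ite, Finset.sum_ite_eq]⟩
      | zero => exact ⟨0, 0, fun p => by simp⟩
      | add v v' _ _ ih ih' =>
        obtain ⟨l1, x1, h1⟩ := ih
        obtain ⟨l2, x2, h2⟩ := ih'
        refine ⟨l1 + l2, x1 + x2, fun p => ?_⟩
        simp only [Pi.add_apply, h1 p, h2 p, mul_add, Finset.sum_add_distrib]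
        ring
      | smul r v _ ih =>
        obtain ⟨l1, x1, h1⟩ := ih
        refine ⟨r • l1, r • x1, fun p => ?_⟩
        simp only [Pi.smul_apply, smul_eq_mul, h1 p, mul_add, Finset.mul_sum]
        congr 1
        exact Finset.sum_congr rfl fun _ _ => by ring
    obtain ⟨lam, x, hrep⟩ := key
    refine ⟨fun t => -x t, fun i j' hj' j => ?_⟩
    have h1 := hrep ⟨i, j'⟩
    have h2 := hrep ⟨i, j⟩
    have e1 : ∑ t, (a i j' t : ℝ) * (-(x t)) = -∑ t, (a i j' t : ℝ) * x t := by
      rw [← Finset.sum_neg_distrib]; exact Finset.sum_congr rfl fun _ _ => by ring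
    have e2 : ∑ t, (a i j t : ℝ) * (-(x t)) = -∑ t, (a i j t : ℝ) * x t := by
      rw [← Finset.sum_neg_distrib]; exact Finset.sum_congr rfl fun _ _ => by ring
    have hc := hc0 ⟨i, j⟩
    have hce := hcE ⟨i, j'⟩ hj'
    simp only [Pi.add_apply]
    rw [e1, e2, h1, h2, hce]
    linarith
end

section
/- With the setup of the Cayley matrix: the tropical resultant TR(A), defined as the set of coefficient vectors w ∈ ℝ^m for which the tropical solution sets T(F_1),...,T(F_k) of the associated tropical polynomials have a common point in ℝ^n, equals the union over all tuples E = (E_1,...,E_k) of two-element subsets E_i ⊆ {1,...,m_i} of the cones ℝ_{≥0}{e_{i,j} : j ∉ E_i} + rowspace(Cay(A)). -/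
/-- The simple description of the tropical resultant (set-theoretically).  Let
`A 1, ..., A k` be finite indexed families of points `a i j ∈ ℤ^n` with `m i ≥ 2` points
each.  The tropical resultant — the set of coefficient vectors `w ∈ ℝ^m` for which the
tropical solution sets of the associated tropical polynomials
`F i (x) = min_j (w (i,j) + a i j · x)` have a common point — equals the union over all
tuples `E` of two-element subsets `E i ⊆ {1, ..., m i}` of the cones
`ℝ_{≥0}{e (i,j) : j ∉ E i} + rowspace (Cay A)`. -/
theorem tropical_resultant_union_of_cones (k n : ℕ) (m : Fin k → ℕ)
    (hm : ∀ i, 2 ≤ m i) (a : ∀ i : Fin k, Fin (m i) → (Fin n → ℤ)) :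
    {w : ((i : Fin k) × Fin (m i)) → ℝ | ∃ x : Fin n → ℝ, ∀ i : Fin k,
        ∃ j j' : Fin (m i), j ≠ j' ∧
          (∀ j'' : Fin (m i), w ⟨i, j⟩ + ∑ t, (a i j t : ℝ) * x t
              ≤ w ⟨i, j''⟩ + ∑ t, (a i j'' t : ℝ) * x t) ∧
          (∀ j'' : Fin (m i), w ⟨i, j'⟩ + ∑ t, (a i j' t : ℝ) * x t
              ≤ w ⟨i, j''⟩ + ∑ t, (a i j'' t : ℝ) * x t)} =
    {w : ((i : Fin k) × Fin (m i)) → ℝ | ∃ E : ∀ i : Fin k, Finset (Fin (m i)),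
        (∀ i, (E i).card = 2) ∧
        ∃ c : ((i : Fin k) × Fin (m i)) → ℝ,
          (∀ p, 0 ≤ c p) ∧ (∀ p, p.2 ∈ E p.1 → c p = 0) ∧
          ∃ u ∈ Submodule.span ℝ
            ((Set.range fun i0 : Fin k =>
                fun p : (i : Fin k) × Fin (m i) => if p.1 = i0 then (1 : ℝ) else 0) ∪
             (Set.range fun l : Fin n =>
                fun p : (i : Fin k) × Fin (m i) => (a p.1 p.2 l : ℝ))),
            w = c + u} := by
  ext w
  simp only [Set.mem_setOf_eq]
  constructor
  · rintro ⟨x, hx⟩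
    choose j j' hne h1 h2 using hx
    refine ⟨fun i => {j i, j' i}, fun i => Finset.card_pair (hne i),
      fun p => w p + ∑ t, (a p.1 p.2 t : ℝ) * x t
        - (w ⟨p.1, j p.1⟩ + ∑ t, (a p.1 (j p.1) t : ℝ) * x t), ?_, ?_, ?_⟩
    · intro p
      have := h1 p.1 p.2
      dsimp only
      linarith
    · intro p hp
      rcases Finset.mem_insert.1 hp with h | h
      · rcases p with ⟨i, pj⟩
        simp only at h
        subst h
        ring
      · rcases p with ⟨i, pj⟩
        simp only [Finset.mem_singleton] at h
        subst h
        have ha := h1 i (j' i)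
        have hb := h2 i (j i)
        simp only
        linarith
    · refine ⟨fun p => (w ⟨p.1, j p.1⟩ + ∑ t, (a p.1 (j p.1) t : ℝ) * x t)
        - ∑ t, (a p.1 p.2 t : ℝ) * x t, ?_, ?_⟩
      · have : (fun p : (i : Fin k) × Fin (m i) =>
            (w ⟨p.1, j p.1⟩ + ∑ t, (a p.1 (j p.1) t : ℝ) * x t)
              - ∑ t, (a p.1 p.2 t : ℝ) * x t)
          = (∑ i0 : Fin k, (w ⟨i0, j i0⟩ + ∑ t, (a i0 (j i0) t : ℝ) * x t) •
              (fun p : (i : Fin k) × Fin (m i) => if p.1 = i0 then (1 : ℝ) else 0))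
            + (∑ l : Fin n, (-x l) •
              (fun p : (i : Fin k) × Fin (m i) => (a p.1 p.2 l : ℝ))) := by
          funext p
          simp only [Pi.add_apply, Finset.sum_apply, Pi.smul_apply, smul_eq_mul,
            mul_ite, mul_one, mul_zero, Finset.sum_ite_eq, Finset.sum_ite_eq', Finset.mem_univ, if_pos]
          rw [Finset.sum_congr rfl (fun t _ => by ring : ∀ t ∈ Finset.univ,
            -x t * (a p.1 p.2 t : ℝ) = -((a p.1 p.2 t : ℝ) * x t)), Finset.sum_neg_distrib]
          ring
        rw [this]
        refine Submodule.add_mem _ (Submodule.sum_mem _ fun i0 _ =>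
          Submodule.smul_mem _ _ (Submodule.subset_span ?_))
          (Submodule.sum_mem _ fun l _ =>
          Submodule.smul_mem _ _ (Submodule.subset_span ?_))
        · exact Set.mem_union_left _ ⟨i0, rfl⟩
        · exact Set.mem_union_right _ ⟨l, rfl⟩
      · funext p
        simp only [Pi.add_apply]
        ring
  · rintro ⟨E, hcard, c, hc0, hcE, u, hu, rfl⟩
    rw [Submodule.span_union] at hu
    rcases Submodule.mem_sup.1 hu with ⟨y, hy, z, hz, rfl⟩
    rw [Submodule.mem_span_range_iff_exists_fun] at hy hz
    obtain ⟨lam, hlam⟩ := hy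
    obtain ⟨yv, hyv⟩ := hz
    refine ⟨fun t => -yv t, fun i => ?_⟩
    obtain ⟨j, j', hjj', hE⟩ := Finset.card_eq_two.1 (hcard i)
    have key : ∀ p : (i : Fin k) × Fin (m i),
        (y + z) p + ∑ t, (a p.1 p.2 t : ℝ) * (-yv t) = lam p.1 := by
      intro p
      have hyp : y p = lam p.1 := by
        rw [← hlam]
        simp only [Finset.sum_apply, Pi.smul_apply, smul_eq_mul, mul_ite, mul_one,
          mul_zero, Finset.sum_ite_eq, Finset.sum_ite_eq', Finset.mem_univ, if_pos]
      have hzp : z p = ∑ t, yv t * (a p.1 p.2 t : ℝ) := by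
        rw [← hyv]
        simp only [Finset.sum_apply, Pi.smul_apply, smul_eq_mul]
      rw [Pi.add_apply, hyp, hzp]
      rw [Finset.sum_congr rfl (fun t _ => by ring : ∀ t ∈ Finset.univ,
        (a p.1 p.2 t : ℝ) * (-yv t) = -(yv t * (a p.1 p.2 t : ℝ))), Finset.sum_neg_distrib]
      ring
    refine ⟨j, j', hjj', fun j'' => ?_, fun j'' => ?_⟩
    · have h1 := key ⟨i, j⟩
      have h2 := key ⟨i, j''⟩
      have hcj : c ⟨i, j⟩ = 0 := hcE ⟨i, j⟩ (by rw [hE]; simp)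
      have := hc0 ⟨i, j''⟩
      simp only [Pi.add_apply] at *
      linarith
    · have h1 := key ⟨i, j'⟩
      have h2 := key ⟨i, j''⟩
      have hcj : c ⟨i, j'⟩ = 0 := hcE ⟨i, j'⟩ (by rw [hE]; simp)
      have := hc0 ⟨i, j''⟩
      simp only [Pi.add_apply] at *
      linarith
end

section
/- Let A_1,...,A_k be finite families of points in ℤ^n and let C be the k × m matrix whose row i has a 1 in each coordinate indexed by a point of A_i and 0 elsewhere (the first k rows of the Cayley matrix). Then the union of cones ⋃_E ℝ_{≥0}{e_{i,j} : j ∉ E_i} + rowspace(Cay(A)) equals T(ker C) + rowspace[A_1 | A_2 | ... | A_k], where T(ker C) is the tropical linear space of ker C, namely the product over i of the tropical hyperplanes {w ∈ ℝ^{m_i} : min of w is attained at least twice} (embedded appropriately) plus the span of the rows of C. -/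
/-- The tropical resultant as a tropical linear space plus a classical linear space.
With `A 1, ..., A k` finite families of points in `ℤ^n` and `C` the `k × m` 0/1 matrix
whose row `i` indicates the points of `A i` (the first `k` rows of the Cayley matrix),
the union of cones `⋃_E ℝ_{≥0}{e (i,j) : j ∉ E i} + rowspace (Cay A)` equals
`T(ker C) + rowspace [A 1 | ⋯ | A k]`, where `T(ker C)` — the tropicalization of
`ker C` — is the product over `i` of the tropical hyperplanes
`{w ∈ ℝ^{m i} : the minimum of the coordinates of w is attained at least twice}`,
plus the span of the rows of `C`. -/
theorem tropical_resultant_eq_troplin_plus_rowspace (k n : ℕ) (m : Fin k → ℕ)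
    (hm : ∀ i, 2 ≤ m i) (a : ∀ i : Fin k, Fin (m i) → (Fin n → ℤ)) :
    {w : ((i : Fin k) × Fin (m i)) → ℝ | ∃ E : ∀ i : Fin k, Finset (Fin (m i)),
        (∀ i, (E i).card = 2) ∧
        ∃ c : ((i : Fin k) × Fin (m i)) → ℝ,
          (∀ p, 0 ≤ c p) ∧ (∀ p, p.2 ∈ E p.1 → c p = 0) ∧
          ∃ u ∈ Submodule.span ℝ
            ((Set.range fun i0 : Fin k =>
                fun p : (i : Fin k) × Fin (m i) => if p.1 = i0 then (1 : ℝ) else 0) ∪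
             (Set.range fun l : Fin n =>
                fun p : (i : Fin k) × Fin (m i) => (a p.1 p.2 l : ℝ))),
            w = c + u} =
    {w : ((i : Fin k) × Fin (m i)) → ℝ |
        ∃ h u v : ((i : Fin k) × Fin (m i)) → ℝ,
          (∀ i : Fin k, ∃ j j' : Fin (m i), j ≠ j' ∧
            (∀ j'' : Fin (m i), h ⟨i, j⟩ ≤ h ⟨i, j''⟩) ∧ h ⟨i, j⟩ = h ⟨i, j'⟩) ∧
          u ∈ Submodule.span ℝ (Set.range fun i0 : Fin k =>
                fun p : (i : Fin k) × Fin (m i) => if p.1 = i0 then (1 : ℝ) else 0) ∧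
          v ∈ Submodule.span ℝ (Set.range fun l : Fin n =>
                fun p : (i : Fin k) × Fin (m i) => (a p.1 p.2 l : ℝ)) ∧
          w = h + u + v} := by
  ext w
  simp only [Set.mem_setOf_eq]
  constructor
  · rintro ⟨E, hE, c, hc0, hcE, u, hu, hw⟩
    rw [Submodule.span_union, Submodule.mem_sup] at hu
    obtain ⟨u1, hu1, u2, hu2, huu⟩ := hu
    refine ⟨c, u1, u2, ?_, hu1, hu2, ?_⟩
    · intro i
      obtain ⟨j, j', hjj, hEi⟩ := Finset.card_eq_two.mp (hE i)
      have hj : c ⟨i, j⟩ = 0 := hcE ⟨i, j⟩ (by simp [hEi])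
      have hj' : c ⟨i, j'⟩ = 0 := hcE ⟨i, j'⟩ (by simp [hEi])
      exact ⟨j, j', hjj, fun j'' => hj ▸ hc0 ⟨i, j''⟩, by rw [hj, hj']⟩
    · rw [hw, ← huu, add_assoc]
  · rintro ⟨h, u, v, hmin, hu, hv, hw⟩
    choose j j' hjj hle heq using hmin
    refine ⟨fun i => {j i, j' i}, fun i => Finset.card_pair (hjj i),
      fun p => h p - h ⟨p.1, j p.1⟩, fun p => sub_nonneg.mpr (hle p.1 p.2), ?_,
      (fun p => h ⟨p.1, j p.1⟩) + u + v, ?_, ?_⟩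
    · rintro ⟨i, x⟩ hx
      simp only [Finset.mem_insert, Finset.mem_singleton] at hx
      rcases hx with rfl | rfl
      · simp
      · simp [← heq i]
    · rw [Submodule.span_union]
      refine Submodule.add_mem _ (Submodule.add_mem _ ?_ ?_) ?_
      · have : (fun p : (i : Fin k) × Fin (m i) => h ⟨p.1, j p.1⟩) =
            ∑ i0 : Fin k, h ⟨i0, j i0⟩ •
              (fun p : (i : Fin k) × Fin (m i) => if p.1 = i0 then (1 : ℝ) else 0) := by
          funext p
          simp only [Finset.sum_apply, Pi.smul_apply, smul_eq_mul, mul_ite, mul_one, mul_zero]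
          rw [Finset.sum_ite_eq Finset.univ p.1 (fun i0 => h ⟨i0, j i0⟩)]
          simp
        rw [this]
        exact Submodule.sum_mem _ fun i0 _ =>
          Submodule.smul_mem _ _ (Submodule.mem_sup_left (Submodule.subset_span ⟨i0, rfl⟩))
      · exact Submodule.mem_sup_left hu
      · exact Submodule.mem_sup_right hv
    · funext p
      rw [hw]
      simp only [Pi.add_apply]
      ring
end

section
/- Let A be a finite point configuration in ℝ^d whose points affinely span an r-dimensional affine subspace, with |A| = m (points labeled 1,...,m, columns of a d × m matrix also denoted A). Then the set of weight vectors ω ∈ ℝ^m whose induced regular subdivision of A is NOT a triangulation equals the union over subsets I ⊆ {1,...,m} with |I| = r+2 of the cones ℝ_{≥0}{e_i : i ∉ I} + rowspace(A) + ℝ·𝟙, where 𝟙 is the all-ones vector. -/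
/-- The tropical hypersurface of the secondary polytope.  Let `A` be a configuration of
`m` labeled points in `ℝ^d` affinely spanning an `r`-dimensional subspace.  A weight
`ω ∈ ℝ^m` induces a regular subdivision which is not a triangulation precisely when some
`r + 2` labeled points are lifted to a common lower face, i.e. some `r + 2` labels lie
in a common cell of the induced subdivision.  This locus equals the union, over subsets
`I ⊆ {1, ..., m}` with `|I| = r + 2`, of the cones
`ℝ_{≥0}{e i : i ∉ I} + rowspace A + ℝ·𝟙`. -/
theorem secondary_polytope_tropical_hypersurface (d m r : ℕ)
    (a : Fin m → (Fin d → ℝ))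
    (hr : Module.finrank ℝ ↥(vectorSpan ℝ (Set.range a)) = r) :
    {ω : Fin m → ℝ | ∃ I : Finset (Fin m), I.card = r + 2 ∧
        ∃ x : Fin d → ℝ, ∀ i ∈ I, ∀ j : Fin m,
          ω i + ∑ t, a i t * x t ≤ ω j + ∑ t, a j t * x t} =
    {ω : Fin m → ℝ | ∃ I : Finset (Fin m), I.card = r + 2 ∧
        ∃ c : Fin m → ℝ, (∀ i, 0 ≤ c i) ∧ (∀ i ∈ I, c i = 0) ∧
        ∃ u ∈ Submodule.span ℝ (Set.range fun l : Fin d => fun i : Fin m => a i l),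
        ∃ s : ℝ, ω = c + u + s • (fun _ : Fin m => (1 : ℝ))} := by
  ext ω
  simp only [Set.mem_setOf_eq]
  constructor
  · rintro ⟨I, hI, x, hx⟩
    have hIne : I.Nonempty := by
      rw [← Finset.card_pos, hI]; omega
    obtain ⟨i0, hi0⟩ := hIne
    set s := ω i0 + ∑ t, a i0 t * x t with hs
    refine ⟨I, hI, fun j => ω j + ∑ t, a j t * x t - s, ?_, ?_,
      fun j => -∑ t, a j t * x t, ?_, s, ?_⟩
    · intro j; have := hx i0 hi0 j; simp only; linarith
    · intro i hi
      have h1 := hx i0 hi0 i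
      have h2 := hx i hi i0
      simp only; linarith
    · rw [Submodule.mem_span_range_iff_exists_fun]
      refine ⟨fun t => -x t, ?_⟩
      funext j
      simp only [Finset.sum_apply, Pi.smul_apply, smul_eq_mul, neg_mul]
      rw [← Finset.sum_neg_distrib]
      apply Finset.sum_congr rfl; intro t _; ring
    · funext j
      simp only [Pi.add_apply, Pi.smul_apply, smul_eq_mul]
      ring
  · rintro ⟨I, hI, c, hc0, hcI, u, hu, s, hω⟩
    rw [Submodule.mem_span_range_iff_exists_fun] at hu
    obtain ⟨x, hx⟩ := hu
    have huj : ∀ j, u j = ∑ t, a j t * x t := by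
      intro j
      rw [← hx]
      simp only [Finset.sum_apply, Pi.smul_apply, smul_eq_mul]
      apply Finset.sum_congr rfl; intro t _; ring
    refine ⟨I, hI, fun t => -x t, ?_⟩
    intro i hi j
    have hneg : ∀ k : Fin m, ∑ t, a k t * -x t = -∑ t, a k t * x t := by
      intro k
      rw [← Finset.sum_neg_distrib]
      apply Finset.sum_congr rfl; intro t _; ring
    have hωi := congrFun hω i
    have hωj := congrFun hω j
    simp only [Pi.add_apply, Pi.smul_apply, smul_eq_mul, mul_one] at hωi hωj
    have := hc0 j
    have := hcI i hi
    rw [hneg i, hneg j, hωi, hωj, huj i, huj j]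
    linarith
end

section
/- Let F be a locally balanced fan in ℝ^N and let L' ⊆ L be linear subspaces of ℝ^N. Then (supp(F) ∩_st L) + L' = (supp(F) + L') ∩_st L, where ∩_st denotes the stable intersection of supports: X ∩_st L = {ω ∈ X ∩ L : link_ω(X) + L = ℝ^N} (using the characterization that stable intersection with a linear space L consists of points ω of X ∩ L where the link of X at ω together with L spans ℝ^N). -/
open scoped Pointwise

/-- The positive span (conical hull) of a set of vectors. -/
def posSpan {n : ℕ} (S : Set (Fin n → ℝ)) : Set (Fin n → ℝ) :=
  {x | ∃ (N : ℕ) (t : Fin N → ℝ) (u : Fin N → (Fin n → ℝ)),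
    (∀ j, 0 ≤ t j) ∧ (∀ j, u j ∈ S) ∧ x = ∑ j, t j • u j}

/-- The link of a set `S` at a point `ω`. -/
def linkAt {n : ℕ} (S : Set (Fin n → ℝ)) (ω : Fin n → ℝ) : Set (Fin n → ℝ) :=
  {u | ∃ δ > (0 : ℝ), ∀ ε : ℝ, 0 < ε → ε < δ → ω + ε • u ∈ S}

/-- The relative interior of a convex set (standard characterization). -/
def relint {n : ℕ} (S : Set (Fin n → ℝ)) : Set (Fin n → ℝ) :=
  {x | x ∈ S ∧ ∀ y ∈ S, ∃ ε : ℝ, 0 < ε ∧ x + ε • (x - y) ∈ S}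

/-- `C` is a locally balanced polyhedral fan of dimension `d` in `ℝ^n`. -/
structure IsLocallyBalancedFan {n : ℕ} {ι : Type*} [Fintype ι]
    (C : ι → Set (Fin n → ℝ)) (d : ℕ) : Prop where
  poly : ∀ i, ∃ (N : ℕ) (f : Fin N → ((Fin n → ℝ) →ₗ[ℝ] ℝ)),
    C i = {x | ∀ j, 0 ≤ f j x}
  inter_face : ∀ i j, IsExtreme ℝ (C i) (C i ∩ C j) ∧ IsExtreme ℝ (C j) (C i ∩ C j)
  face_mem : ∀ i, ∀ F : Set (Fin n → ℝ), F.Nonempty → IsExtreme ℝ (C i) F → ∃ j, C j = F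
  pure : ∀ i, ∃ j, C i ⊆ C j ∧ Module.finrank ℝ ↥(Submodule.span ℝ (C j)) = d
  balanced : ∀ i, Module.finrank ℝ ↥(Submodule.span ℝ (C i)) = d - 1 →
    ∀ ω ∈ relint (C i), ∃ W : Submodule ℝ (Fin n → ℝ),
      posSpan (linkAt (⋃ j, C j) ω) = ↑W

/-- The stable intersection of a set `X` (the support of a fan) with a linear space
`L`: the points `ω ∈ X ∩ L` where the link of `X` at `ω` together with `L` spans
`ℝ^N`, i.e. `link_ω(X) + L = ℝ^N`. -/
def stInt {N : ℕ} (X : Set (Fin N → ℝ)) (L : Set (Fin N → ℝ)) : Set (Fin N → ℝ) :=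
  {ω | ω ∈ X ∩ L ∧ Set.image2 (· + ·) (linkAt X ω) L = Set.univ}

private lemma extreme_union' {n : ℕ} {A B C : Set (Fin n → ℝ)}
    (hB : IsExtreme ℝ A B) (hC : IsExtreme ℝ A C) : IsExtreme ℝ A (B ∪ C) := by
  constructor
  · exact Set.union_subset hB.1 hC.1
  · intro x1 hx1 x2 hx2 z hz hseg
    rcases hz with hz | hz
    · exact Or.inl (hB.2 hx1 hx2 hz hseg)
    · exact Or.inr (hC.2 hx1 hx2 hz hseg)

private lemma active_total {N : ℕ} {ι : Type*} [Fintype ι] {C : ι → Set (Fin N → ℝ)} {d : ℕ}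
    (hF : IsLocallyBalancedFan C d) (i : ι) {M : ℕ} {f : Fin M → ((Fin N → ℝ) →ₗ[ℝ] ℝ)}
    (hrep : C i = {x | ∀ j, 0 ≤ f j x}) :
    ∀ u ∈ C i, ∀ v ∈ C i,
      (∀ j, f j u = 0 → f j v = 0) ∨ (∀ j, f j v = 0 → f j u = 0) := by
  intro u hu v hv
  have hGext : ∀ a, a ∈ C i →
      IsExtreme ℝ (C i) {z | z ∈ C i ∧ ∀ j, f j a = 0 → f j z = 0} := by
    intro a _
    constructor
    · exact fun z hz => hz.1
    · intro x1 hx1 x2 hx2 z hz hseg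
      obtain ⟨s, t, hs, ht, hst, hcomb⟩ := hseg
      have hx1' : ∀ j, 0 ≤ f j x1 := by rw [hrep] at hx1; exact hx1
      have hx2' : ∀ j, 0 ≤ f j x2 := by rw [hrep] at hx2; exact hx2
      have key : ∀ j, f j a = 0 → f j x1 = 0 ∧ f j x2 = 0 := by
        intro j hj
        have hz2 := hz.2 j hj
        rw [← hcomb] at hz2
        simp only [map_add, map_smul, smul_eq_mul] at hz2
        constructor <;> nlinarith [hx1' j, hx2' j]
      exact ⟨hx1, fun j hj => (key j hj).1⟩
  set Gu : Set (Fin N → ℝ) := {z | z ∈ C i ∧ ∀ j, f j u = 0 → f j z = 0} with hGu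
  set Gv : Set (Fin N → ℝ) := {z | z ∈ C i ∧ ∀ j, f j v = 0 → f j z = 0} with hGv
  have huGu : u ∈ Gu := ⟨hu, fun j h => h⟩
  have hvGv : v ∈ Gv := ⟨hv, fun j h => h⟩
  obtain ⟨k, hk⟩ := hF.face_mem i (Gu ∪ Gv) ⟨u, Or.inl huGu⟩
    (extreme_union' (hGext u hu) (hGext v hv))
  obtain ⟨M', f', hk'⟩ := hF.poly k
  have hconv : Convex ℝ (Gu ∪ Gv) := by
    rw [← hk, hk']
    intro p hp q hq a b ha hb hab
    intro j
    simp only [Set.mem_setOf_eq] at hp hq ⊢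
    simp only [map_add, map_smul, smul_eq_mul]
    nlinarith [hp j, hq j]
  have hm : (1/2 : ℝ) • u + (1/2 : ℝ) • v ∈ Gu ∪ Gv :=
    hconv (Or.inl huGu) (Or.inr hvGv) (by norm_num) (by norm_num) (by norm_num)
  rcases hm with hm | hm
  · left
    intro j hj
    have h1 := hm.2 j hj
    simp only [map_add, map_smul, smul_eq_mul] at h1
    linarith [h1, hj]
  · right
    intro j hj
    have h1 := hm.2 j hj
    simp only [map_add, map_smul, smul_eq_mul] at h1
    linarith [h1, hj]





private def rayW {n : ℕ} (S : Set (Fin n → ℝ)) (v : Fin n → ℝ) : Set (Fin n → ℝ) :=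
  {x | ∃ w ∈ S, ∃ t : ℝ, 0 ≤ t ∧ x = w + t • v}

private def wneg {n : ℕ} (S : Set (Fin n → ℝ)) : Set (Fin n → ℝ) := {x | x ∈ S ∧ -x ∈ S}

private lemma wneg_add {n : ℕ} {S : Set (Fin n → ℝ)}
    (hadd : ∀ a b, a ∈ S → b ∈ S → a + b ∈ S) :
    ∀ a b, a ∈ wneg S → b ∈ wneg S → a + b ∈ wneg S := by
  intro a b ha hb
  exact ⟨hadd _ _ ha.1 hb.1, by rw [neg_add]; exact hadd _ _ ha.2 hb.2⟩

private lemma wneg_smul {n : ℕ} {S : Set (Fin n → ℝ)}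
    (hsmul : ∀ (t : ℝ) (x), 0 ≤ t → x ∈ S → t • x ∈ S) :
    ∀ (c : ℝ) (x), x ∈ wneg S → c • x ∈ wneg S := by
  intro c x hx
  rcases le_or_gt 0 c with hc | hc
  · exact ⟨hsmul c x hc hx.1, by rw [← smul_neg]; exact hsmul c _ hc hx.2⟩
  · constructor
    · rw [show c • x = (-c) • (-x) by module]
      exact hsmul _ _ (by linarith) hx.2
    · rw [show -(c • x) = (-c) • x by module]
      exact hsmul _ _ (by linarith) hx.1

private lemma wneg_neg_mem {n : ℕ} {S : Set (Fin n → ℝ)} {x : Fin n → ℝ}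
    (hx : x ∈ wneg S) : -x ∈ wneg S := ⟨hx.2, by rw [neg_neg]; exact hx.1⟩

private lemma extreme_of_ray_like {n : ℕ} {S F : Set (Fin n → ℝ)} {v : Fin n → ℝ}
    (hadd : ∀ a b, a ∈ S → b ∈ S → a + b ∈ S)
    (hsmul : ∀ (t : ℝ) (x), 0 ≤ t → x ∈ S → t • x ∈ S)
    (hstruct : S = rayW (wneg S) v)
    (hext : IsExtreme ℝ S F) (hne : F.Nonempty) : F = wneg S ∨ F = S := by
  have hWS : wneg S ⊆ S := fun x hx => hx.1
  by_cases hFW : F ⊆ wneg S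
  · left
    apply Set.Subset.antisymm hFW
    obtain ⟨z, hz⟩ := hne
    have hzW : z ∈ wneg S := hFW hz
    intro w hw
    by_cases hwz : w = z
    · exact hwz ▸ hz
    · have h2z : z + z + -w ∈ wneg S :=
        wneg_add hadd _ _ (wneg_add hadd _ _ hzW hzW) (wneg_neg_mem hw)
      have hseg : z ∈ openSegment ℝ w (z + z + -w) := by
        refine ⟨1/2, 1/2, by norm_num, by norm_num, by norm_num, ?_⟩
        module
      exact hext.2 (hWS hw) (hWS h2z) hz hseg
  · right
    rw [Set.not_subset] at hFW
    obtain ⟨p, hp, hpW⟩ := hFW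
    have hpS : p ∈ S := hext.1 hp
    rw [hstruct] at hpS
    obtain ⟨wp, hwp, tp, htp, hpe⟩ := hpS
    have htp0 : 0 < tp := by
      rcases eq_or_lt_of_le htp with h | h
      · exfalso; apply hpW; rw [hpe, ← h, zero_smul, add_zero]; exact hwp
      · exact h
    apply Set.Subset.antisymm hext.1
    intro c hc
    have hcS := hc
    rw [hstruct] at hcS
    obtain ⟨wc, hwc, tc, htc, hce⟩ := hcS
    set ε := tp / (1 + tc) with hε_def
    have h1tc : (0:ℝ) < 1 + tc := by linarith
    have hε : 0 < ε := div_pos htp0 h1tc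
    set q := (1 + ε) • p - ε • c with hq_def
    have hcoef : 0 ≤ (1 + ε) * tp - ε * tc := by
      have hεtc : ε * tc ≤ tp := by
        rw [hε_def, div_mul_eq_mul_div, div_le_iff₀ h1tc]
        nlinarith
      nlinarith
    have hqS : q ∈ S := by
      rw [hstruct]
      refine ⟨(1 + ε) • wp + (-ε) • wc,
        wneg_add hadd _ _ (wneg_smul hsmul _ _ hwp) (wneg_smul hsmul _ _ hwc),
        (1 + ε) * tp - ε * tc, hcoef, ?_⟩
      rw [hq_def, hpe, hce]; module
    have hseg : p ∈ openSegment ℝ c q := by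
      have h1ε : (0:ℝ) < 1 + ε := by linarith
      refine ⟨ε / (1 + ε), 1 / (1 + ε), by positivity, by positivity, by field_simp; ring, ?_⟩
      rw [hq_def]
      match_scalars <;> (field_simp; try ring)
    exact hext.2 hc hqS hp hseg




private lemma extreme_union {n : ℕ} {A B C : Set (Fin n → ℝ)}
    (hB : IsExtreme ℝ A B) (hC : IsExtreme ℝ A C) : IsExtreme ℝ A (B ∪ C) := by
  constructor
  · exact Set.union_subset hB.1 hC.1
  · intro x1 hx1 x2 hx2 z hz hseg
    rcases hz with hz | hz
    · exact Or.inl (hB.2 hx1 hx2 hz hseg)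
    · exact Or.inr (hC.2 hx1 hx2 hz hseg)

private lemma extreme_of_subspace_like {n : ℕ} {S F : Set (Fin n → ℝ)}
    (hadd : ∀ a b, a ∈ S → b ∈ S → a + b ∈ S)
    (hneg : ∀ x ∈ S, -x ∈ S)
    (hext : IsExtreme ℝ S F) (hne : F.Nonempty) : F = S := by
  obtain ⟨z, hz⟩ := hne
  apply Set.Subset.antisymm hext.1
  intro c hc
  by_cases hcz : c = z
  · exact hcz ▸ hz
  · have h2z : z + z + -c ∈ S := hadd _ _ (hadd _ _ (hext.1 hz) (hext.1 hz)) (hneg c hc)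
    have hseg : z ∈ openSegment ℝ c (z + z + -c) := by
      refine ⟨1/2, 1/2, by norm_num, by norm_num, by norm_num, ?_⟩
      module
    exact hext.2 hc h2z hz hseg

private lemma cover_submodule {N : ℕ} {κ : Type*} [Fintype κ] (U : κ → Submodule ℝ (Fin N → ℝ))
    (h : ∀ z : Fin N → ℝ, ∃ k, z ∈ U k) : ∃ k, U k = ⊤ := by
  by_contra hcon
  push_neg at hcon
  have h1 : MeasureTheory.volume (⋃ k, (U k : Set (Fin N → ℝ))) = 0 :=
    MeasureTheory.measure_iUnion_null fun k =>
      MeasureTheory.Measure.addHaar_submodule _ _ (hcon k)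
  have h2 : (⋃ k, (U k : Set (Fin N → ℝ))) = Set.univ :=
    Set.eq_univ_iff_forall.2 fun z => Set.mem_iUnion.2 (h z)
  rw [h2] at h1
  have h3 : MeasureTheory.volume (Set.univ : Set (Fin N → ℝ)) ≠ 0 :=
    (isOpen_univ.measure_pos _ ⟨0, trivial⟩).ne'
  exact h3 h1



private lemma dagger {n M : ℕ} (f : Fin M → ((Fin n → ℝ) →ₗ[ℝ] ℝ))
    (tot : ∀ u v : Fin n → ℝ, (∀ j, 0 ≤ f j u) → (∀ j, 0 ≤ f j v) →
      (∀ j, f j u = 0 → f j v = 0) ∨ (∀ j, f j v = 0 → f j u = 0)) :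
    ∀ (k : ℕ) (u v : Fin n → ℝ), (∀ j, 0 ≤ f j u) → (∀ j, 0 ≤ f j v) →
      (¬ ∀ j, f j u = 0) → (¬ ∀ j, f j v = 0) →
      2 * M ≤ {j | f j u = 0}.ncard + {j | f j v = 0}.ncard + k →
      (∃ w, (∀ j, f j w = 0) ∧ ∃ t : ℝ, 0 < t ∧ v = w + t • u) ∨
      (∃ w, (∀ j, f j w = 0) ∧ ∃ t : ℝ, 0 < t ∧ u = w + t • v) := by
  classical
  have hcard : ∀ x : Fin n → ℝ, (¬ ∀ j, f j x = 0) → {j | f j x = 0}.ncard < M := by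
    intro x hx
    push_neg at hx
    obtain ⟨j0, hj0⟩ := hx
    have hss : {j | f j x = 0} ⊂ Set.univ :=
      ⟨Set.subset_univ _, fun h => hj0 (h (Set.mem_univ j0))⟩
    have := Set.ncard_lt_ncard hss Set.finite_univ
    simpa [Set.ncard_univ] using this
  intro k
  induction k with
  | zero =>
    intro u v hu hv hu' hv' hm
    have h1 := hcard u hu'
    have h2 := hcard v hv'
    omega
  | succ k IH =>
    have main : ∀ u v : Fin n → ℝ, (∀ j, 0 ≤ f j u) → (∀ j, 0 ≤ f j v) →
        (¬ ∀ j, f j u = 0) → (¬ ∀ j, f j v = 0) →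
        2 * M ≤ {j | f j u = 0}.ncard + {j | f j v = 0}.ncard + (k + 1) →
        (∀ j, f j u = 0 → f j v = 0) →
        (∃ w, (∀ j, f j w = 0) ∧ ∃ t : ℝ, 0 < t ∧ v = w + t • u) ∨
        (∃ w, (∀ j, f j w = 0) ∧ ∃ t : ℝ, 0 < t ∧ u = w + t • v) := by
      intro u v hu hv hu' hv' hm hJ
      have hFu : (Finset.univ.filter (fun j => 0 < f j u)).Nonempty := by
        push_neg at hu'
        obtain ⟨j0, hj0⟩ := hu'
        exact ⟨j0, Finset.mem_filter.2 ⟨Finset.mem_univ _, lt_of_le_of_ne (hu j0) (Ne.symm hj0)⟩⟩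
      obtain ⟨j₁, hj₁mem, hj₁min⟩ :=
        Finset.exists_min_image _ (fun j => f j v / f j u) hFu
      have hj₁u : 0 < f j₁ u := (Finset.mem_filter.1 hj₁mem).2
      set t := f j₁ v / f j₁ u with ht_def
      have ht0 : 0 ≤ t := div_nonneg (hv j₁) hj₁u.le
      have hyC : ∀ j, 0 ≤ f j (v - t • u) := by
        intro j
        rcases lt_or_ge 0 (f j u) with hju | hju
        · have hmin := hj₁min j (Finset.mem_filter.2 ⟨Finset.mem_univ _, hju⟩)
          have : t * f j u ≤ f j v := by
            rw [← le_div_iff₀ hju]; exact hmin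
          simp only [map_sub, map_smul, smul_eq_mul]
          linarith
        · have hju0 : f j u = 0 := le_antisymm hju (hu j)
          simp only [map_sub, map_smul, smul_eq_mul, hju0, mul_zero, sub_zero]
          exact hv j
      by_cases hyW : ∀ j, f j (v - t • u) = 0
      · left
        have htpos : 0 < t := by
          rcases eq_or_lt_of_le ht0 with h | h
          · exfalso
            apply hv'
            intro j
            have := hyW j
            rw [← h, zero_smul, sub_zero] at this
            exact this
          · exact h
        exact ⟨v - t • u, hyW, t, htpos, by module⟩
      · by_cases htpos : 0 < t
        · have hsub : {j | f j v = 0} ⊂ {j | f j (v - t • u) = 0} := by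
            constructor
            · intro j hj
              simp only [Set.mem_setOf_eq] at hj ⊢
              have h2 : f j (v - t • u) ≤ 0 := by
                simp only [map_sub, map_smul, smul_eq_mul, hj]
                nlinarith [hu j]
              exact le_antisymm h2 (hyC j)
            · intro hcontra
              have hj₁y : f j₁ (v - t • u) = 0 := by
                simp only [map_sub, map_smul, smul_eq_mul, ht_def]
                field_simp
                ring
              have hj₁v : f j₁ v ≠ 0 := by
                intro h0
                rw [ht_def, h0, zero_div] at htpos
                exact lt_irrefl 0 htpos
              exact hj₁v (hcontra hj₁y)
          have hmeas : 2 * M ≤ {j | f j u = 0}.ncard + {j | f j (v - t • u) = 0}.ncard + k := by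
            have := Set.ncard_lt_ncard hsub (Set.toFinite _)
            omega
          rcases IH u (v - t • u) hu hyC hu' hyW hmeas with
            ⟨w, hw, s, hs, hys⟩ | ⟨w, hw, s, hs, hus⟩
          · left
            refine ⟨w, hw, s + t, by linarith, ?_⟩
            have : v = w + s • u + t • u := by
              rw [← hys]; abel
            rw [this, add_smul]; abel
          · right
            have hst : (0:ℝ) < 1 + s * t := by nlinarith
            refine ⟨(1 + s * t)⁻¹ • w, fun j => by simp [map_smul, smul_eq_mul, hw j],
              s / (1 + s * t), by positivity, ?_⟩
            have h1 : (1 + s * t) • u = w + s • v := by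
              calc (1 + s * t) • u = u + (s * t) • u := by module
              _ = (w + s • (v - t • u)) + (s * t) • u := by rw [← hus]
              _ = w + s • v := by module
            calc u = (1 + s * t)⁻¹ • ((1 + s * t) • u) := by
                  rw [smul_smul, inv_mul_cancel₀ hst.ne', one_smul]
            _ = (1 + s * t)⁻¹ • (w + s • v) := by rw [h1]
            _ = (1 + s * t)⁻¹ • w + (s / (1 + s * t)) • v := by
                  rw [smul_add, smul_smul, div_eq_inv_mul]
        · have ht0' : t = 0 := le_antisymm (not_lt.1 htpos) ht0
          have hFv : (Finset.univ.filter (fun j => 0 < f j v)).Nonempty := by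
            push_neg at hv'
            obtain ⟨j0, hj0⟩ := hv'
            exact ⟨j0, Finset.mem_filter.2 ⟨Finset.mem_univ _, lt_of_le_of_ne (hv j0) (Ne.symm hj0)⟩⟩
          obtain ⟨j₂, hj₂mem, hj₂min⟩ :=
            Finset.exists_min_image _ (fun j => f j u / f j v) hFv
          have hj₂v : 0 < f j₂ v := (Finset.mem_filter.1 hj₂mem).2
          set s := f j₂ u / f j₂ v with hs_def
          have hs0' : 0 ≤ s := div_nonneg (hu j₂) hj₂v.le
          have hs0 : 0 < s := by
            rcases eq_or_lt_of_le hs0' with h | h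
            · exfalso
              have hj₂u : f j₂ u = 0 := by
                have := h.symm
                rw [hs_def, div_eq_zero_iff] at this
                rcases this with h' | h'
                · exact h'
                · exact absurd h' hj₂v.ne'
              exact hj₂v.ne' (hJ j₂ hj₂u)
            · exact h
          have hzC : ∀ j, 0 ≤ f j (u - s • v) := by
            intro j
            rcases lt_or_ge 0 (f j v) with hjv | hjv
            · have hmin := hj₂min j (Finset.mem_filter.2 ⟨Finset.mem_univ _, hjv⟩)
              have : s * f j v ≤ f j u := by
                rw [← le_div_iff₀ hjv]; exact hmin
              simp only [map_sub, map_smul, smul_eq_mul]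
              linarith
            · have hjv0 : f j v = 0 := le_antisymm hjv (hv j)
              simp only [map_sub, map_smul, smul_eq_mul, hjv0, mul_zero, sub_zero]
              exact hu j
          by_cases hzW : ∀ j, f j (u - s • v) = 0
          · right
            exact ⟨u - s • v, hzW, s, hs0, by module⟩
          · have hsub : {j | f j u = 0} ⊂ {j | f j (u - s • v) = 0} := by
              constructor
              · intro j hj
                simp only [Set.mem_setOf_eq] at hj ⊢
                have hjv0 : f j v = 0 := hJ j hj
                simp only [map_sub, map_smul, smul_eq_mul, hj, hjv0, mul_zero, sub_zero]
              · intro hcontra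
                have hj₂z : f j₂ (u - s • v) = 0 := by
                  simp only [map_sub, map_smul, smul_eq_mul, hs_def]
                  field_simp
                  ring
                have hj₂u : f j₂ u ≠ 0 := by
                  intro h0
                  rw [hs_def, h0, zero_div] at hs0
                  exact lt_irrefl 0 hs0
                exact hj₂u (hcontra hj₂z)
            have hmeas : 2 * M ≤ {j | f j (u - s • v) = 0}.ncard + {j | f j v = 0}.ncard + k := by
              have := Set.ncard_lt_ncard hsub (Set.toFinite _)
              omega
            rcases IH (u - s • v) v hzC hv hzW hv' hmeas with
              ⟨w, hw, r, hr, hvr⟩ | ⟨w, hw, r, hr, hzr⟩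
            · left
              have hrs : (0:ℝ) < 1 + r * s := by nlinarith
              refine ⟨(1 + r * s)⁻¹ • w, fun j => by simp [map_smul, smul_eq_mul, hw j],
                r / (1 + r * s), by positivity, ?_⟩
              have h1 : (1 + r * s) • v = w + r • u := by
                calc (1 + r * s) • v = v + (r * s) • v := by module
                _ = (w + r • (u - s • v)) + (r * s) • v := by rw [← hvr]
                _ = w + r • u := by module
              calc v = (1 + r * s)⁻¹ • ((1 + r * s) • v) := by
                    rw [smul_smul, inv_mul_cancel₀ hrs.ne', one_smul]
              _ = (1 + r * s)⁻¹ • (w + r • u) := by rw [h1]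
              _ = (1 + r * s)⁻¹ • w + (r / (1 + r * s)) • u := by
                    rw [smul_add, smul_smul, div_eq_inv_mul]
            · right
              refine ⟨w, hw, r + s, by linarith, ?_⟩
              have : u = w + r • v + s • v := by
                rw [← hzr]; abel
              rw [this, add_smul]; abel
    intro u v hu hv hu' hv' hm
    rcases tot u v hu hv with hJ | hJ
    · exact main u v hu hv hu' hv' hm hJ
    · exact (main v u hv hu hv' hu' (by omega) hJ).symm

private lemma cone_struct {N : ℕ} {ι : Type*} [Fintype ι] {C : ι → Set (Fin N → ℝ)} {d : ℕ}
    (hF : IsLocallyBalancedFan C d) (i : ι) :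
    (∃ Wsub : Submodule ℝ (Fin N → ℝ), (Wsub : Set (Fin N → ℝ)) = wneg (C i)) ∧
      ((∀ x ∈ C i, -x ∈ C i) ∨
        ∃ v ∈ C i, v ∉ wneg (C i) ∧ C i = rayW (wneg (C i)) v) := by
  obtain ⟨M, f, hrep⟩ := hF.poly i
  have hWrep : wneg (C i) = {x | ∀ j, f j x = 0} := by
    ext x
    simp only [wneg, hrep, Set.mem_setOf_eq]
    constructor
    · rintro ⟨h1, h2⟩ j
      have h3 := h2 j
      rw [map_neg] at h3
      have h4 := h1 j
      linarith
    · intro h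
      exact ⟨fun j => (h j).ge, fun j => by rw [map_neg, h j]; norm_num⟩
  constructor
  · refine ⟨⨅ j, LinearMap.ker (f j), ?_⟩
    rw [hWrep]
    ext x
    simp [Submodule.mem_iInf, LinearMap.mem_ker]
  by_cases hneg : ∀ x ∈ C i, -x ∈ C i
  · exact Or.inl hneg
  push_neg at hneg
  obtain ⟨v, hv, hvneg⟩ := hneg
  have hvW : v ∉ wneg (C i) := fun h => hvneg h.2
  refine Or.inr ⟨v, hv, hvW, ?_⟩
  have tot' : ∀ a b : Fin N → ℝ, (∀ j, 0 ≤ f j a) → (∀ j, 0 ≤ f j b) →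
      (∀ j, f j a = 0 → f j b = 0) ∨ (∀ j, f j b = 0 → f j a = 0) := by
    intro a b ha hb
    exact active_total hF i hrep a (by rw [hrep]; exact ha) b (by rw [hrep]; exact hb)
  apply Set.Subset.antisymm
  · intro x hx
    by_cases hxW : x ∈ wneg (C i)
    · exact ⟨x, hxW, 0, le_refl 0, by simp⟩
    · have hxf : ∀ j, 0 ≤ f j x := by rw [hrep] at hx; exact hx
      have hvf : ∀ j, 0 ≤ f j v := by rw [hrep] at hv; exact hv
      have hxW' : ¬ ∀ j, f j x = 0 := by rw [hWrep] at hxW; exact hxW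
      have hvW' : ¬ ∀ j, f j v = 0 := by rw [hWrep] at hvW; exact hvW
      rcases dagger f tot' (2 * M) v x hvf hxf hvW' hxW' (by omega) with
        ⟨w, hw, t, ht, hx_eq⟩ | ⟨w, hw, t, ht, hv_eq⟩
      · exact ⟨w, by rw [hWrep]; exact hw, t, ht.le, hx_eq⟩
      · refine ⟨(-(t⁻¹)) • w, ?_, t⁻¹, (by positivity : (0:ℝ) < t⁻¹).le, ?_⟩
        · rw [hWrep]
          intro j
          simp [map_smul, smul_eq_mul, hw j]
        · have h1 : t • x = v - w := by rw [hv_eq]; abel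
          calc x = t⁻¹ • (t • x) := by rw [smul_smul, inv_mul_cancel₀ ht.ne', one_smul]
          _ = t⁻¹ • (v - w) := by rw [h1]
          _ = (-(t⁻¹)) • w + t⁻¹ • v := by module
  · rintro x ⟨w, hw, t, ht, rfl⟩
    rw [hrep]
    intro j
    have hwj : f j w = 0 := by rw [hWrep] at hw; exact hw j
    have hvf : 0 ≤ f j v := by rw [hrep] at hv; exact hv j
    simp only [map_add, map_smul, smul_eq_mul, hwj, zero_add]
    exact mul_nonneg ht hvf
private lemma master {N : ℕ} {ι : Type*} [Fintype ι] [Nonempty ι]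
    {C : ι → Set (Fin N → ℝ)} {d : ℕ} (hF : IsLocallyBalancedFan C d) :
    ∃ (W : Submodule ℝ (Fin N → ℝ)) (v : ι → (Fin N → ℝ)),
      (⋃ i, C i) = ⋃ i, rayW (W : Set (Fin N → ℝ)) (v i) := by
  classical
  choose top htopsub htoprank using hF.pure
  have hzero : ∀ k, (0 : Fin N → ℝ) ∈ C k := by
    intro k
    obtain ⟨M, f, hrep⟩ := hF.poly k
    rw [hrep]; intro j; simp
  have hadd : ∀ k, ∀ a b : Fin N → ℝ, a ∈ C k → b ∈ C k → a + b ∈ C k := by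
    intro k
    obtain ⟨M, f, hrep⟩ := hF.poly k
    intro a b ha hb
    rw [hrep] at ha hb ⊢
    intro j
    simp only [map_add, Set.mem_setOf_eq]
    exact add_nonneg (ha j) (hb j)
  have hsmul : ∀ k, ∀ (t : ℝ) (x : Fin N → ℝ), 0 ≤ t → x ∈ C k → t • x ∈ C k := by
    intro k
    obtain ⟨M, f, hrep⟩ := hF.poly k
    intro t x ht hx
    rw [hrep] at hx ⊢
    intro j
    simp only [map_smul, smul_eq_mul, Set.mem_setOf_eq]
    exact mul_nonneg ht (hx j)
  have hXtop : (⋃ i, C i) = ⋃ i, C (top i) := by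
    apply Set.Subset.antisymm
    · exact Set.iUnion_subset fun i => (htopsub i).trans (Set.subset_iUnion (fun j => C (top j)) i)
    · exact Set.iUnion_subset fun i => Set.subset_iUnion C (top i)
  have hFne : ∀ i j : ι, (C i ∩ C j).Nonempty := fun i j => ⟨0, hzero i, hzero j⟩
  -- mixed type contradiction
  have key : ∀ a b : ι,
      Module.finrank ℝ ↥(Submodule.span ℝ (C a)) = d →
      Module.finrank ℝ ↥(Submodule.span ℝ (C b)) = d →
      (∀ x ∈ C a, -x ∈ C a) →
      ∀ vb ∈ C b, vb ∉ wneg (C b) → C b = rayW (wneg (C b)) vb → False := by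
    intro a b hrka hrkb hnega vb hvb hvbW hstrb
    have h1 : C a ∩ C b = C a :=
      extreme_of_subspace_like (hadd a) hnega (hF.inter_face a b).1 (hFne a b)
    have h2 : C a ∩ C b = wneg (C b) ∨ C a ∩ C b = C b :=
      extreme_of_ray_like (hadd b) (hsmul b) hstrb (hF.inter_face a b).2 (hFne a b)
    rcases h2 with h2 | h2
    · -- C a = wneg (C b) : dimension contradiction
      have hab : C a = wneg (C b) := h1 ▸ h2
      obtain ⟨Wb, hWb⟩ := (cone_struct hF b).1
      have hspa : Submodule.span ℝ (C a) = Wb := by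
        rw [hab, ← hWb]
        exact Submodule.span_eq Wb
      have hspb : Submodule.span ℝ (C b) = Wb ⊔ Submodule.span ℝ {vb} := by
        apply le_antisymm
        · rw [Submodule.span_le]
          rintro x hx
          rw [hstrb] at hx
          obtain ⟨w, hw, t, ht, rfl⟩ := hx
          have hwW : w ∈ Wb := by rw [← SetLike.mem_coe, hWb]; exact hw
          exact SetLike.mem_coe.2 (Submodule.add_mem _ (Submodule.mem_sup_left hwW)
            (Submodule.mem_sup_right (Submodule.smul_mem _ _ (Submodule.mem_span_singleton_self _))))
        · apply sup_le
          · intro w hw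
            apply Submodule.subset_span
            have hw' : w ∈ wneg (C b) := by rw [← hWb]; exact SetLike.mem_coe.2 hw
            exact hw'.1
          · rw [Submodule.span_le]
            intro x hx
            rw [Set.mem_singleton_iff] at hx
            exact Submodule.subset_span (hx ▸ hvb)
      have hlt : Wb < Wb ⊔ Submodule.span ℝ {vb} := by
        refine lt_of_le_of_ne le_sup_left fun h => ?_
        have hvmem : vb ∈ Wb := by
          rw [h]
          exact Submodule.mem_sup_right (Submodule.mem_span_singleton_self _)
        exact hvbW (by rw [← hWb]; exact SetLike.mem_coe.2 hvmem)
      have hfr := Submodule.finrank_lt_finrank_of_lt hlt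
      rw [← hspb, ← hspa, hrka, hrkb] at hfr
      exact lt_irrefl d hfr
    · -- C a = C b
      have hab : C a = C b := h1 ▸ h2
      apply hvbW
      constructor
      · exact hvb
      · rw [← hab]
        exact hnega vb (hab ▸ hvb)
  -- the main dichotomy
  set i₀ := Classical.arbitrary ι with hi₀
  by_cases hty : ∀ x ∈ C (top i₀), -x ∈ C (top i₀)
  · -- all tops are the same subspace
    obtain ⟨W, hWcoe⟩ := (cone_struct hF (top i₀)).1
    have hWC : (W : Set (Fin N → ℝ)) = C (top i₀) := by
      rw [hWcoe]
      apply Set.Subset.antisymm (fun x hx => hx.1)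
      intro x hx
      exact ⟨hx, hty x hx⟩
    have hall : ∀ i, C (top i) = C (top i₀) := by
      intro i
      rcases (cone_struct hF (top i)).2 with hsub | ⟨vi, hvi, hviW, hstri⟩
      · have h1 : C (top i₀) ∩ C (top i) = C (top i₀) :=
          extreme_of_subspace_like (hadd _) hty (hF.inter_face (top i₀) (top i)).1 (hFne _ _)
        have h2 : C (top i₀) ∩ C (top i) = C (top i) :=
          extreme_of_subspace_like (hadd _) hsub (hF.inter_face (top i₀) (top i)).2 (hFne _ _)
        rw [← h2, h1]
      · exact absurd (key (top i₀) (top i) (htoprank i₀) (htoprank i) hty vi hvi hviW hstri) id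
    refine ⟨W, fun _ => 0, ?_⟩
    rw [hXtop]
    have hray0 : rayW (W : Set (Fin N → ℝ)) 0 = (W : Set (Fin N → ℝ)) := by
      apply Set.Subset.antisymm
      · rintro x ⟨w, hw, t, ht, rfl⟩
        simpa using hw
      · intro x hx
        exact ⟨x, hx, 0, le_rfl, by simp⟩
    apply Set.iUnion_congr
    intro i
    rw [hall i, hray0, hWC]
  · -- all tops are ray-type with common lineality
    have hray : ∀ i, ∃ vi ∈ C (top i), vi ∉ wneg (C (top i)) ∧
        C (top i) = rayW (wneg (C (top i))) vi := by
      intro i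
      rcases (cone_struct hF (top i)).2 with hsub | h
      · exfalso
        rcases (cone_struct hF (top i₀)).2 with hsub₀ | ⟨v₀, hv₀, hv₀W, hstr₀⟩
        · exact hty hsub₀
        · exact key (top i) (top i₀) (htoprank i) (htoprank i₀) hsub v₀ hv₀ hv₀W hstr₀
      · exact h
    choose vv hvv hvvW hvvstr using hray
    have hWeq : ∀ i, wneg (C (top i)) = wneg (C (top i₀)) := by
      intro i
      have hext₀ := (hF.inter_face (top i₀) (top i)).1
      have hexti := (hF.inter_face (top i₀) (top i)).2
      have h₀ := extreme_of_ray_like (hadd _) (hsmul _) (hvvstr i₀) hext₀ (hFne _ _)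
      have h₁ := extreme_of_ray_like (hadd _) (hsmul _) (hvvstr i) hexti (hFne _ _)
      rcases h₀ with h₀ | h₀ <;> rcases h₁ with h₁ | h₁
      · exact h₁.symm.trans h₀
      · -- C (top i) = wneg (C (top i₀)) : then C top i neg-closed, contra hvvW i
        exfalso
        apply hvvW i
        have hi : C (top i) = wneg (C (top i₀)) := h₁.symm.trans h₀
        refine ⟨hvv i, ?_⟩
        have h3 : vv i ∈ wneg (C (top i₀)) := hi ▸ hvv i
        have hn := wneg_neg_mem h3
        rw [← hi] at hn
        exact hn
      · -- C (top i₀) = wneg (C (top i)) : then top i₀ neg-closed, contra hty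
        exfalso
        apply hty
        intro x hx
        have hi : C (top i₀) = wneg (C (top i)) := h₀.symm.trans h₁
        have h3 : x ∈ wneg (C (top i)) := hi ▸ hx
        have hn := wneg_neg_mem h3
        rw [← hi] at hn
        exact hn
      · -- C (top i₀) = C (top i)
        have h3 : C (top i) = C (top i₀) := h₁.symm.trans h₀
        rw [h3]
    obtain ⟨W, hWcoe⟩ := (cone_struct hF (top i₀)).1
    refine ⟨W, vv, ?_⟩
    rw [hXtop]
    apply Set.iUnion_congr
    intro i
    rw [hvvstr i, hWeq i, hWcoe]

/-- Stable intersection with a linear space commutes with Minkowski sum with a smaller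
linear space: for a locally balanced fan `F` with support `X` in `ℝ^N` and linear
subspaces `L' ⊆ L`, `(X ∩_st L) + L' = (X + L') ∩_st L`. -/
theorem stable_intersection_minkowski_comm {N : ℕ} {ι : Type*} [Fintype ι]
    (C : ι → Set (Fin N → ℝ)) (d : ℕ) (hF : IsLocallyBalancedFan C d)
    (L L' : Submodule ℝ (Fin N → ℝ)) (hL : L' ≤ L) :
    stInt (⋃ i, C i) ↑L + (↑L' : Set (Fin N → ℝ)) =
      stInt ((⋃ i, C i) + (↑L' : Set (Fin N → ℝ))) ↑L := by
  classical
  rcases isEmpty_or_nonempty ι with hempty | hne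
  · rw [Set.iUnion_of_empty]
    have h1 : stInt (∅ : Set (Fin N → ℝ)) ↑L = ∅ := by
      ext ω
      simp [stInt]
    rw [Set.empty_add, h1, Set.empty_add]
  · obtain ⟨W, v, hX⟩ := master hF
    set X := ⋃ i, C i with hXdef
    apply Set.Subset.antisymm
    · -- easy direction
      rintro ω hω
      rw [Set.mem_add] at hω
      obtain ⟨x, hx, l', hl', hxl⟩ := hω
      obtain ⟨⟨hxX, hxL⟩, hgood⟩ := hx
      refine ⟨⟨?_, ?_⟩, ?_⟩
      · rw [Set.mem_add]
        exact ⟨x, hxX, l', hl', hxl⟩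
      · rw [← hxl]
        exact SetLike.mem_coe.2 (L.add_mem (SetLike.mem_coe.1 hxL) (hL hl'))
      · apply Set.eq_univ_iff_forall.2
        intro z
        have hz : z ∈ Set.image2 (· + ·) (linkAt X x) ↑L := hgood ▸ Set.mem_univ z
        obtain ⟨u, hu, l, hl, huz⟩ := Set.mem_image2.1 hz
        refine Set.mem_image2.2 ⟨u, ?_, l, hl, huz⟩
        obtain ⟨δ, hδ, hu'⟩ := hu
        refine ⟨δ, hδ, fun ε hε1 hε2 => ?_⟩
        rw [Set.mem_add]
        exact ⟨x + ε • u, hu' ε hε1 hε2, l', hl', by rw [← hxl]; abel⟩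
    · -- hard direction
      rintro ω ⟨⟨hωXL', hωL⟩, hlink⟩
      set W'' := W ⊔ L' with hW''def
      have hπ0 : ∀ x : Fin N → ℝ, W''.mkQ x = 0 ↔ x ∈ W'' := fun x => by
        rw [← LinearMap.mem_ker, Submodule.ker_mkQ]
      have hXL' : X + (↑L' : Set (Fin N → ℝ)) = ⋃ i, rayW (↑W'' : Set (Fin N → ℝ)) (v i) := by
        ext z
        rw [Set.mem_add]
        constructor
        · rintro ⟨x, hx, l', hl', hzeq⟩
          rw [hX] at hx
          obtain ⟨i, hx⟩ := Set.mem_iUnion.1 hx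
          obtain ⟨w, hw, t, ht, hxeq⟩ := hx
          refine Set.mem_iUnion.2 ⟨i, w + l', ?_, t, ht, ?_⟩
          · exact SetLike.mem_coe.2 (W''.add_mem (Submodule.mem_sup_left (SetLike.mem_coe.1 hw))
              (Submodule.mem_sup_right hl'))
          · rw [← hzeq, hxeq]; abel
        · intro hz
          obtain ⟨i, hz⟩ := Set.mem_iUnion.1 hz
          obtain ⟨w'', hw'', t, ht, hzeq⟩ := hz
          obtain ⟨w, hw, l', hl', hwl⟩ := Submodule.mem_sup.1 (SetLike.mem_coe.1 hw'')
          refine ⟨w + t • v i, ?_, l', hl', ?_⟩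
          · rw [hX]
            exact Set.mem_iUnion.2 ⟨i, w, SetLike.mem_coe.2 hw, t, ht, rfl⟩
          · rw [hzeq, ← hwl]; abel
      by_cases hωW : ω ∈ W''
      · -- ω in the lineality space
        obtain ⟨w, hw, l', hl', hwl⟩ := Submodule.mem_sup.1 hωW
        have hwX : w ∈ X := by
          rw [hX]
          exact Set.mem_iUnion.2 ⟨Classical.arbitrary ι, w, SetLike.mem_coe.2 hw, 0, le_rfl,
            by simp⟩
        have hwLmem : w ∈ L := by
          have hweq : w = ω - l' := by rw [← hwl]; abel
          rw [hweq]
          exact L.sub_mem (SetLike.mem_coe.1 hωL) (hL hl')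
        refine Set.mem_add.2 ⟨w, ⟨⟨hwX, SetLike.mem_coe.2 hwLmem⟩, ?_⟩, l', hl', hwl⟩
        apply Set.eq_univ_iff_forall.2
        intro z
        have hz : z ∈ Set.image2 (· + ·) (linkAt (X + (↑L' : Set (Fin N → ℝ))) ω) ↑L := hlink ▸ Set.mem_univ z
        obtain ⟨u, hu, l, hl, huz⟩ := Set.mem_image2.1 hz
        obtain ⟨δ, hδ, hu'⟩ := hu
        have hmem := hu' (δ/2) (by positivity) (by linarith)
        rw [hXL'] at hmem
        obtain ⟨i, hmem⟩ := Set.mem_iUnion.1 hmem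
        obtain ⟨w₂, hw₂, t, ht, heq⟩ := hmem
        have hδ2 : (δ/2 : ℝ) ≠ 0 := by positivity
        have hu_eq : u = (δ/2)⁻¹ • (w₂ - ω) + ((δ/2)⁻¹ * t) • v i := by
          have h1 : (δ/2) • u = w₂ + t • v i - ω := by rw [← heq]; abel
          calc u = (δ/2)⁻¹ • ((δ/2) • u) := by
                rw [smul_smul, inv_mul_cancel₀ hδ2, one_smul]
          _ = (δ/2)⁻¹ • (w₂ + t • v i - ω) := by rw [h1]
          _ = (δ/2)⁻¹ • (w₂ - ω) + ((δ/2)⁻¹ * t) • v i := by module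
        have hw₂ω : (δ/2)⁻¹ • (w₂ - ω) ∈ W'' :=
          W''.smul_mem _ (W''.sub_mem (SetLike.mem_coe.1 hw₂) hωW)
        obtain ⟨w₃, hw₃, l₃, hl₃, h₃⟩ := Submodule.mem_sup.1 hw₂ω
        refine Set.mem_image2.2 ⟨w₃ + ((δ/2)⁻¹ * t) • v i, ?_, l₃ + l, ?_, ?_⟩
        · refine ⟨1, one_pos, fun ε hε1 hε2 => ?_⟩
          rw [hX]
          refine Set.mem_iUnion.2 ⟨i, w + ε • w₃,
            SetLike.mem_coe.2 (W.add_mem hw (W.smul_mem ε hw₃)), ε * ((δ/2)⁻¹ * t), ?_, by module⟩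
          have ht' : 0 ≤ (δ/2)⁻¹ * t := by positivity
          positivity
        · exact SetLike.mem_coe.2 (L.add_mem (hL hl₃) (SetLike.mem_coe.1 hl))
        · rw [← huz, hu_eq, ← h₃]; abel
      · -- ω outside the lineality space
        set π := W''.mkQ with hπdef
        have hπω : π ω ≠ 0 := fun h => hωW ((hπ0 ω).1 h)
        have keyU : ∀ u ∈ linkAt (X + (↑L' : Set (Fin N → ℝ))) ω, ∃ i,
            (∃ a : ℝ, 0 < a ∧ π ω = a • π (v i)) ∧ (∃ c : ℝ, π u = c • π (v i)) := by
          rintro u ⟨δ, hδ, hu⟩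
          have hpig : ∃ i, ∀ η : ℝ, 0 < η → ∃ ε : ℝ, 0 < ε ∧ ε < η ∧ ε < δ ∧
              ω + ε • u ∈ rayW (↑W'' : Set (Fin N → ℝ)) (v i) := by
            by_contra hcon
            push_neg at hcon
            choose η hη hbad using hcon
            set m := Finset.univ.inf' Finset.univ_nonempty η with hm
            have hmpos : 0 < m := by
              rw [hm, Finset.lt_inf'_iff]
              exact fun i _ => hη i
            set ε₀ := min δ m / 2 with hε₀
            have hε₀pos : 0 < ε₀ := by
              rw [hε₀]
              have : 0 < min δ m := lt_min hδ hmpos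
              positivity
            have hε₀δ : ε₀ < δ := by
              rw [hε₀]
              have h1 : min δ m ≤ δ := min_le_left _ _
              linarith
            have hmem := hu ε₀ hε₀pos hε₀δ
            rw [hXL'] at hmem
            obtain ⟨i, hi⟩ := Set.mem_iUnion.1 hmem
            refine hbad i ε₀ hε₀pos ?_ hε₀δ hi
            have h1 : min δ m ≤ m := min_le_right _ _
            have h2 : m ≤ η i := Finset.inf'_le _ (Finset.mem_univ i)
            rw [hε₀]
            linarith
          obtain ⟨i, hsm⟩ := hpig
          have hπeq : ∀ (ε t : ℝ) (w₁ : Fin N → ℝ), w₁ ∈ (↑W'' : Set (Fin N → ℝ)) →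
              ω + ε • u = w₁ + t • v i → π ω + ε • π u = t • π (v i) := by
            intro ε t w₁ hw₁ he
            have h0 : π w₁ = 0 := (hπ0 w₁).2 (SetLike.mem_coe.1 hw₁)
            have h1 := congrArg π he
            simp only [map_add, map_smul] at h1
            rw [h0, zero_add] at h1
            exact h1
          obtain ⟨ε₁, hε₁0, hε₁1, hε₁δ, hm₁⟩ := hsm 1 one_pos
          obtain ⟨ε₂, hε₂0, hε₂1, hε₂δ, hm₂⟩ := hsm ε₁ hε₁0
          obtain ⟨w₁, hw₁, t₁, ht₁, he₁⟩ := hm₁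
          obtain ⟨w₂, hw₂, t₂, ht₂, he₂⟩ := hm₂
          have hπ₁ := hπeq ε₁ t₁ w₁ hw₁ he₁
          have hπ₂ := hπeq ε₂ t₂ w₂ hw₂ he₂
          have hε₁₂ : ε₁ - ε₂ ≠ 0 := sub_ne_zero.2 (ne_of_gt hε₂1)
          have hπv : π (v i) ≠ 0 := by
            intro h0
            rw [h0, smul_zero] at hπ₁ hπ₂
            have h3 : ε₁ • π u = ε₂ • π u := by
              have := hπ₁.trans hπ₂.symm
              exact add_left_cancel this
            have h4 : (ε₁ - ε₂) • π u = 0 := by rw [sub_smul, h3, sub_self]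
            have h5 : π u = 0 := by
              rcases smul_eq_zero.1 h4 with h | h
              · exact absurd h hε₁₂
              · exact h
            rw [h5, smul_zero, add_zero] at hπ₁
            exact hπω hπ₁
          have hsubeq : (ε₁ - ε₂) • π u = (t₁ - t₂) • π (v i) := by
            calc (ε₁ - ε₂) • π u = (π ω + ε₁ • π u) - (π ω + ε₂ • π u) := by module
            _ = t₁ • π (v i) - t₂ • π (v i) := by rw [hπ₁, hπ₂]
            _ = (t₁ - t₂) • π (v i) := by module
          set c := (ε₁ - ε₂)⁻¹ * (t₁ - t₂) with hc
          have hπu : π u = c • π (v i) := by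
            calc π u = (ε₁ - ε₂)⁻¹ • ((ε₁ - ε₂) • π u) := by
                  rw [smul_smul, inv_mul_cancel₀ hε₁₂, one_smul]
            _ = (ε₁ - ε₂)⁻¹ • ((t₁ - t₂) • π (v i)) := by rw [hsubeq]
            _ = c • π (v i) := by rw [smul_smul]
          set a := t₁ - ε₁ * c with ha
          have hπωa : π ω = a • π (v i) := by
            have h1 : π ω = t₁ • π (v i) - ε₁ • π u := by rw [← hπ₁]; abel
            rw [h1, hπu]
            module
          have hane : a ≠ 0 := fun h0 => hπω (by rw [hπωa, h0, zero_smul])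
          have hapos : 0 < a := by
            rcases lt_or_ge 0 a with h | h
            · exact h
            · exfalso
              have haneg : a < 0 := lt_of_le_of_ne h hane
              rcases le_or_gt c 0 with hc0 | hc0
              · have h7 : ε₁ * c ≤ 0 := mul_nonpos_of_nonneg_of_nonpos hε₁0.le hc0
                linarith
              · obtain ⟨ε₃, hε₃0, hε₃η, hε₃δ, hm₃⟩ := hsm (-a/c) (div_pos (by linarith) hc0)
                obtain ⟨w₃, hw₃, t₃, ht₃, he₃⟩ := hm₃
                have hπ₃ := hπeq ε₃ t₃ w₃ hw₃ he₃
                have h5 : (a + ε₃ * c - t₃) • π (v i) = 0 := by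
                  rw [hπωa, hπu] at hπ₃
                  calc (a + ε₃ * c - t₃) • π (v i)
                      = (a • π (v i) + ε₃ • (c • π (v i))) - t₃ • π (v i) := by module
                  _ = 0 := by rw [hπ₃]; abel
                have ht₃eq : t₃ = a + ε₃ * c := by
                  rcases smul_eq_zero.1 h5 with h' | h'
                  · linarith
                  · exact absurd h' hπv
                have h6 : ε₃ * c < -a := (lt_div_iff₀ hc0).1 hε₃η
                linarith
          exact ⟨i, ⟨a, hapos, hπωa⟩, ⟨c, hπu⟩⟩
        -- covering argument
        set U : ι → Submodule ℝ (Fin N → ℝ) := fun i =>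
          if (∃ a : ℝ, 0 < a ∧ π ω = a • π (v i)) then W ⊔ L ⊔ Submodule.span ℝ {v i}
          else ⊥ with hU
        have hWle : ∀ i, W'' ≤ W ⊔ L ⊔ Submodule.span ℝ {v i} := by
          intro i
          rw [hW''def]
          apply sup_le
          · exact le_sup_of_le_left le_sup_left
          · exact le_sup_of_le_left (le_sup_of_le_right hL)
        have hcover : ∀ z : Fin N → ℝ, ∃ i, z ∈ U i := by
          intro z
          have hz : z ∈ Set.image2 (· + ·) (linkAt (X + (↑L' : Set (Fin N → ℝ))) ω) ↑L := hlink ▸ Set.mem_univ z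
          obtain ⟨u, hu, l, hl, huz⟩ := Set.mem_image2.1 hz
          obtain ⟨i, hcond, c, hπu⟩ := keyU u hu
          refine ⟨i, ?_⟩
          rw [hU]
          simp only [if_pos hcond]
          have h1 : u - c • v i ∈ W'' := by
            apply (hπ0 _).1
            rw [map_sub, map_smul, hπu, sub_self]
          have h2 : u - c • v i ∈ W ⊔ L ⊔ Submodule.span ℝ {v i} := hWle i h1
          have h3 : c • v i ∈ W ⊔ L ⊔ Submodule.span ℝ {v i} :=
            Submodule.mem_sup_right (Submodule.smul_mem _ _ (Submodule.mem_span_singleton_self _))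
          have h4 : l ∈ W ⊔ L ⊔ Submodule.span ℝ {v i} :=
            Submodule.mem_sup_left (Submodule.mem_sup_right (SetLike.mem_coe.1 hl))
          have h5 : z = (u - c • v i) + c • v i + l := by rw [← huz]; abel
          rw [h5]
          exact Submodule.add_mem _ (Submodule.add_mem _ h2 h3) h4
        obtain ⟨i, hitop⟩ := cover_submodule U hcover
        have hcond : ∃ a : ℝ, 0 < a ∧ π ω = a • π (v i) := by
          by_contra hcond
          simp only [hU] at hitop
          rw [if_neg hcond] at hitop
          have : ω ∈ (⊥ : Submodule ℝ (Fin N → ℝ)) := hitop ▸ Submodule.mem_top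
          rw [Submodule.mem_bot] at this
          exact hωW (this ▸ W''.zero_mem)
        have hU_top : W ⊔ L ⊔ Submodule.span ℝ {v i} = ⊤ := by
          simp only [hU] at hitop
          rwa [if_pos hcond] at hitop
        obtain ⟨a, hapos, hπωa⟩ := hcond
        have hωav : ω - a • v i ∈ W'' := by
          apply (hπ0 _).1
          rw [map_sub, map_smul, hπωa, sub_self]
        obtain ⟨w, hw, l', hl', hwl⟩ := Submodule.mem_sup.1 hωav
        set x := w + a • v i with hx_def
        have hxX : x ∈ X := by
          rw [hX]
          exact Set.mem_iUnion.2 ⟨i, w, SetLike.mem_coe.2 hw, a, hapos.le, rfl⟩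
        have hxl'ω : x + l' = ω := by
          have h1 : x + l' = (w + l') + a • v i := by rw [hx_def]; abel
          rw [h1, hwl]
          abel
        have hxL : x ∈ L := by
          have h1 : x = ω - l' := by rw [← hxl'ω]; abel
          rw [h1]
          exact L.sub_mem (SetLike.mem_coe.1 hωL) (hL hl')
        have hgood : Set.image2 (· + ·) (linkAt X x) (↑L : Set (Fin N → ℝ)) = Set.univ := by
          apply Set.eq_univ_iff_forall.2
          intro z
          have hz : z ∈ W ⊔ L ⊔ Submodule.span ℝ {v i} := hU_top ▸ Submodule.mem_top
          obtain ⟨y, hy, sv, hsv, hysz⟩ := Submodule.mem_sup.1 hz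
          obtain ⟨s, hs_eq⟩ := Submodule.mem_span_singleton.1 hsv
          obtain ⟨w_z, hwz, l_z, hlz, hwlz⟩ := Submodule.mem_sup.1 hy
          refine Set.mem_image2.2 ⟨w_z + s • v i, ?_, l_z, SetLike.mem_coe.2 hlz, ?_⟩
          · refine ⟨if 0 ≤ s then 1 else a / (-s), ?_, fun ε hε1 hε2 => ?_⟩
            · split_ifs with hs
              · exact one_pos
              · exact div_pos hapos (neg_pos.2 (not_le.1 hs))
            · rw [hX]
              have hcoef : 0 ≤ a + ε * s := by
                split_ifs at hε2 with hs
                · have h7 : 0 ≤ ε * s := mul_nonneg hε1.le hs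
                  linarith
                · have hs' : s < 0 := not_le.1 hs
                  have h6 : ε * (-s) < a := (lt_div_iff₀ (neg_pos.2 hs')).1 hε2
                  have h7 : ε * s = -(ε * (-s)) := by ring
                  linarith
              have hxeq : x + ε • (w_z + s • v i) = (w + ε • w_z) + (a + ε * s) • v i := by
                rw [hx_def]; module
              exact Set.mem_iUnion.2 ⟨i, w + ε • w_z,
                SetLike.mem_coe.2 (W.add_mem hw (W.smul_mem ε hwz)), a + ε * s, hcoef, hxeq⟩
          · rw [← hysz, ← hwlz, ← hs_eq]
            abel
        exact Set.mem_add.2 ⟨x, ⟨⟨hxX, SetLike.mem_coe.2 hxL⟩, hgood⟩, l', hl', hxl'ω⟩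
end

section
/- Let A_1,...,A_k be finite point configurations in ℝ^n with A_i = {a_{i,1},...,a_{i,m_i}}. Given weight vectors w_i ∈ ℝ^{m_i}, define the tropical polynomials F_i(x) = min_j (w_{i,j} + a_{i,j}·x). Then the tuple (w_1,...,w_k) lies in the tropical resultant (i.e., ⋂_i T(F_i) ≠ ∅) if and only if the regular mixed subdivision of A_1 + ... + A_k induced by (w_1,...,w_k) contains a fully mixed cell, i.e., a maximal cell labeled J_1 × ... × J_k with |J_i| ≥ 2 for all i. -/
/-- A tuple of tropical polynomials lies in the tropical resultant iff the induced
regular mixed subdivision has a fully mixed cell.  Let `A 1, ..., A k` be finite point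
configurations in `ℝ^n` with points `a i j` (`j < m i`) and weights `w i j`, and let
`F i (x) = min_j (w i j + a i j · x)`.  Then the tropical solution sets
`T(F 1), ..., T(F k)` have a common point iff the regular mixed subdivision of
`A 1 + ⋯ + A k` induced by `w` (the regular subdivision of the product-labeled Minkowski
sum configuration with weight `J ↦ ∑ i w i (J i)`) contains a cell labeled
`J 1 × ⋯ × J k` with `|J i| ≥ 2` for all `i`. -/
theorem tropical_resultant_iff_fully_mixed_cell (k n : ℕ) (m : Fin k → ℕ)
    (hm : ∀ i, 2 ≤ m i) (a : ∀ i : Fin k, Fin (m i) → (Fin n → ℝ))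
    (w : ∀ i : Fin k, Fin (m i) → ℝ) :
    (∃ x : Fin n → ℝ, ∀ i : Fin k, ∃ j j' : Fin (m i), j ≠ j' ∧
        (∀ j'', w i j + ∑ t, a i j t * x t ≤ w i j'' + ∑ t, a i j'' t * x t) ∧
        (∀ j'', w i j' + ∑ t, a i j' t * x t ≤ w i j'' + ∑ t, a i j'' t * x t)) ↔
    (∃ (x : Fin n → ℝ) (Js : ∀ i : Fin k, Finset (Fin (m i))),
        (∀ i, 2 ≤ (Js i).card) ∧
        ∀ J : (i : Fin k) → Fin (m i),
          ((∀ J' : (i : Fin k) → Fin (m i),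
              ∑ i, (w i (J i) + ∑ t, a i (J i) t * x t) ≤
                ∑ i, (w i (J' i) + ∑ t, a i (J' i) t * x t)) ↔
            ∀ i, J i ∈ Js i)) := by
  have aux : ∀ (f : ∀ i, Fin (m i) → ℝ) (J : ∀ i, Fin (m i)) (i : Fin k) (b : Fin (m i)),
      ∑ t, f t (Function.update J i b t) = f i b + ∑ t ∈ Finset.univ.erase i, f t (J t) := by
    intro f J i b
    rw [← Finset.add_sum_erase _ _ (Finset.mem_univ i)]
    congr 1
    · simp
    · exact Finset.sum_congr rfl fun t ht => by
        rw [Function.update_of_ne (Finset.ne_of_mem_erase ht)]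
  have auxJ : ∀ (f : ∀ i, Fin (m i) → ℝ) (J : ∀ i, Fin (m i)) (i : Fin k),
      ∑ t, f t (J t) = f i (J i) + ∑ t ∈ Finset.univ.erase i, f t (J t) :=
    fun f J i => (Finset.add_sum_erase _ _ (Finset.mem_univ i)).symm
  constructor
  · rintro ⟨x, hx⟩
    set f : ∀ i, Fin (m i) → ℝ := fun i j => w i j + ∑ t, a i j t * x t with hf
    refine ⟨x, fun i => Finset.univ.filter (fun j => ∀ j'', f i j ≤ f i j''), ?_, ?_⟩
    · intro i
      obtain ⟨j, j', hne, hj, hj'⟩ := hx i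
      exact Finset.one_lt_card.mpr ⟨j, by simpa using hj, j', by simpa using hj', hne⟩
    · intro J
      constructor
      · intro hmin i
        simp only [Finset.mem_filter, Finset.mem_univ, true_and]
        intro j''
        have h := hmin (Function.update J i j'')
        rw [aux f J i j'', auxJ f J i] at h
        linarith
      · intro hJ J'
        refine Finset.sum_le_sum fun i _ => ?_
        have := hJ i
        simp only [Finset.mem_filter, Finset.mem_univ, true_and] at this
        exact this (J' i)
  · rintro ⟨x, Js, hcard, hiff⟩
    set f : ∀ i, Fin (m i) → ℝ := fun i j => w i j + ∑ t, a i j t * x t with hf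
    refine ⟨x, fun i => ?_⟩
    have hne : ∀ i, (Js i).Nonempty := fun i => Finset.card_pos.mp (by have := hcard i; omega)
    classical
    set J₀ : ∀ i, Fin (m i) := fun i => (hne i).choose with hJ₀
    have hJ₀mem : ∀ i, J₀ i ∈ Js i := fun i => (hne i).choose_spec
    have hmin := (hiff J₀).mpr hJ₀mem
    -- any element of Js i achieves the same value as J₀ i, which is minimal
    have hval : ∀ j ∈ Js i, f i j = f i (J₀ i) := by
      intro j hj
      have hmem : ∀ i', Function.update J₀ i j i' ∈ Js i' := by
        intro i'
        by_cases h : i' = i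
        · subst h; simpa using hj
        · rw [Function.update_of_ne h]; exact hJ₀mem i'
      have h1 := (hiff _).mpr hmem (fun t => J₀ t)
      have h2 := hmin (Function.update J₀ i j)
      rw [aux f J₀ i j, auxJ f J₀ i] at h1 h2
      linarith
    have hminval : ∀ j'', f i (J₀ i) ≤ f i j'' := by
      intro j''
      have h := hmin (Function.update J₀ i j'')
      rw [aux f J₀ i j'', auxJ f J₀ i] at h
      linarith
    obtain ⟨j, hj, j', hj', hne'⟩ := Finset.one_lt_card.mp (hcard i)
    refine ⟨j, j', hne', fun j'' => ?_, fun j'' => ?_⟩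
    · have := hminval j''; have h2 := hval j hj
      simp only [hf] at this h2; linarith
    · have := hminval j''; have h2 := hval j' hj'
      simp only [hf] at this h2; linarith
end
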